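/- arXiv:2111.05599 — 9 statements merged into one kernel-verified Lean document; each statement's English description precedes it below -/
import Mathlib

section
/- Let A be an n×n symmetric positive definite real matrix and B an n×m real matrix of full column rank with m < n. Let 𝒜 = [[A, B],[Bᵀ, 0]] and 𝒜̂ = [[A, B],[Bᵀ, -C]] with C = BᵀA⁻¹B. Then every eigenvalue of 𝒜̂⁻¹𝒜 is either 1 (with multiplicity n) or 1/2 (with multiplicity m). -/
/-!
`𝒜̂ · [[I, ½ A⁻¹B], [0, ½ I]] = 𝒜`, the `(2,2)` block being `½ BᵀA⁻¹B - ½ C = 0`, so `𝒜̂⁻¹𝒜` is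
block upper triangular with diagonal blocks `I` and `½ I`. For such a matrix `[[I, W], [0, ½ I]]`
the eigenspace of `1` is `{(x, 0)}` and that of `½` is the graph `{(-2 W y, y)}`, of dimensions `n`
and `m`. `𝒜̂` is invertible since `det 𝒜̂ = det A · det (-2C)` and `C` is positive definite, `B`
being injective.
-/

namespace Matrix

theorem mulVec_injective_of_rank_eq_card {K : Type*} [Field K] {n m : Type*} [Fintype m]
    {B : Matrix n m K} (hB : B.rank = Fintype.card m) : Function.Injective B.mulVec :=
  mulVec_injective_iff.mpr <| linearIndependent_iff_card_eq_finrank_span.mpr <| by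
    rw [← hB, rank_eq_finrank_span_cols, Set.finrank]

section SaddlePoint

variable {K : Type*} [Field K] {n m : Type*} [Fintype n] [Fintype m] [DecidableEq n]
  [DecidableEq m] {A : Matrix n n K} (B : Matrix n m K) (D : Matrix m n K)

theorem fromBlocks_neg_schur_mul (hA : IsUnit A.det) (h2 : (2 : K) ≠ 0) :
    fromBlocks A B D (-(D * A⁻¹ * B)) * fromBlocks 1 ((2⁻¹ : K) • (A⁻¹ * B)) 0 ((2⁻¹ : K) • 1) =
      fromBlocks A B D 0 := by
  rw [fromBlocks_multiply]
  congr 1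
  · simp
  · rw [Matrix.mul_smul, mul_nonsing_inv_cancel_left _ _ hA, Matrix.mul_smul, Matrix.mul_one,
      ← add_smul, ← two_mul, mul_inv_cancel₀ h2, one_smul]
  · simp
  · rw [Matrix.mul_smul, Matrix.mul_smul, Matrix.mul_one, ← Matrix.mul_assoc, smul_neg,
      add_neg_cancel]

theorem isUnit_det_fromBlocks_neg_schur (hA : IsUnit A.det) (hS : IsUnit (D * A⁻¹ * B).det)
    (h2 : (2 : K) ≠ 0) : IsUnit (fromBlocks A B D (-(D * A⁻¹ * B))).det := by
  let := A.invertibleOfIsUnitDet hA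
  have hsub : -(D * A⁻¹ * B) - D * A⁻¹ * B = (-2 : K) • (D * A⁻¹ * B) := by module
  rw [det_fromBlocks₁₁, invOf_eq_nonsing_inv, hsub, det_smul]
  exact hA.mul (((neg_ne_zero.mpr h2).isUnit.pow _).mul hS)

theorem fromBlocks_neg_schur_inv_mul (hA : IsUnit A.det) (hS : IsUnit (D * A⁻¹ * B).det)
    (h2 : (2 : K) ≠ 0) :
    (fromBlocks A B D (-(D * A⁻¹ * B)))⁻¹ * fromBlocks A B D 0 =
      fromBlocks 1 ((2⁻¹ : K) • (A⁻¹ * B)) 0 ((2⁻¹ : K) • 1) := by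
  rw [← fromBlocks_neg_schur_mul B D hA h2, ← Matrix.mul_assoc,
    nonsing_inv_mul _ (isUnit_det_fromBlocks_neg_schur B D hA hS h2), Matrix.one_mul]

end SaddlePoint

theorem mulVec_fromRows_one_left_injective {R : Type*} [Semiring R] {n m : Type*} [Fintype n]
    [DecidableEq n] (X : Matrix m n R) :
    Function.Injective (fromRows (1 : Matrix n n R) X).mulVec :=
  fun x y h => by
    simp only [fromRows_mulVec, one_mulVec, Sum.elim_eq_iff] at h
    exact h.1

theorem mulVec_fromRows_one_right_injective {R : Type*} [Semiring R] {n m : Type*} [Fintype m]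
    [DecidableEq m] (X : Matrix n m R) :
    Function.Injective (fromRows X (1 : Matrix m m R)).mulVec :=
  fun x y h => by
    simp only [fromRows_mulVec, one_mulVec, Sum.elim_eq_iff] at h
    exact h.2

section BlockTriangular

variable {K : Type*} [Field K] {n m : Type*} [Fintype n] [Fintype m] [DecidableEq n]
  [DecidableEq m] (a b : K) (W : Matrix n m K)

theorem fromBlocks_smul_one_sub_smul_one_mulVec (c : K) (x : n → K) (y : m → K) :
    (fromBlocks (a • 1) W 0 (b • 1) - c • 1) *ᵥ Sum.elim x y =
      Sum.elim ((a - c) • x + W *ᵥ y) ((b - c) • y) := by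
  ext (i | j)
  · simp only [sub_mulVec, fromBlocks_mulVec, Sum.elim_comp_inl, smul_mulVec, one_mulVec,
      Sum.elim_comp_inr, zero_mulVec, zero_add, Pi.sub_apply, Sum.elim_inl, Pi.add_apply,
      Pi.smul_apply, smul_eq_mul]
    ring
  · simp [sub_mulVec, fromBlocks_mulVec, smul_mulVec, sub_smul]

theorem eq_or_eq_of_fromBlocks_smul_one_mulVec_eq_smul {μ : K} {v : n ⊕ m → K} (hv : v ≠ 0)
    (h : fromBlocks (a • 1) W 0 (b • 1) *ᵥ v = μ • v) : μ = a ∨ μ = b := by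
  obtain ⟨x, y, rfl⟩ : ∃ x y, v = Sum.elim x y := ⟨_, _, (Sum.elim_comp_inl_inr v).symm⟩
  have h' := fromBlocks_smul_one_sub_smul_one_mulVec a b W μ x y
  rw [sub_mulVec, h, smul_mulVec, one_mulVec, sub_self, eq_comm, ← Sum.elim_zero_zero,
    Sum.elim_eq_iff] at h'
  obtain ⟨hx, hy⟩ := h'
  by_cases hy0 : y = 0
  · subst hy0
    have hx0 : x ≠ 0 := by rintro rfl; exact hv Sum.elim_zero_zero
    rw [mulVec_zero, add_zero, smul_eq_zero, sub_eq_zero] at hx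
    exact .inl (hx.resolve_right hx0).symm
  · rw [smul_eq_zero, sub_eq_zero] at hy
    exact .inr (hy.resolve_right hy0).symm

theorem ker_fromBlocks_smul_one_sub_left (hab : a ≠ b) :
    LinearMap.ker (fromBlocks (a • 1 : Matrix n n K) W 0 (b • 1 : Matrix m m K) - a • 1).mulVecLin =
      LinearMap.range (fromRows (1 : Matrix n n K) 0).mulVecLin := by
  ext v
  obtain ⟨x, y, rfl⟩ : ∃ x y, v = Sum.elim x y := ⟨_, _, (Sum.elim_comp_inl_inr v).symm⟩
  simp only [LinearMap.mem_ker, LinearMap.mem_range, mulVecLin_apply,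
    fromBlocks_smul_one_sub_smul_one_mulVec, fromRows_mulVec, one_mulVec, zero_mulVec,
    ← Sum.elim_zero_zero, Sum.elim_eq_iff, sub_self, zero_smul, zero_add, smul_eq_zero,
    sub_eq_zero, hab.symm, false_or]
  constructor
  · rintro ⟨-, rfl⟩
    exact ⟨x, rfl, rfl⟩
  · rintro ⟨z, -, rfl⟩
    exact ⟨mulVec_zero W, rfl⟩

theorem ker_fromBlocks_smul_one_sub_right (hab : a ≠ b) :
    LinearMap.ker (fromBlocks (a • 1 : Matrix n n K) W 0 (b • 1 : Matrix m m K) - b • 1).mulVecLin =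
      LinearMap.range (fromRows ((b - a)⁻¹ • W) (1 : Matrix m m K)).mulVecLin := by
  ext v
  obtain ⟨x, y, rfl⟩ : ∃ x y, v = Sum.elim x y := ⟨_, _, (Sum.elim_comp_inl_inr v).symm⟩
  simp only [LinearMap.mem_ker, LinearMap.mem_range, mulVecLin_apply,
    fromBlocks_smul_one_sub_smul_one_mulVec, fromRows_mulVec, one_mulVec, smul_mulVec,
    ← Sum.elim_zero_zero, Sum.elim_eq_iff, sub_self, zero_smul, and_true]
  have hba : b - a ≠ 0 := sub_ne_zero.mpr hab.symm
  constructor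
  · intro h
    refine ⟨y, ?_, rfl⟩
    rw [inv_smul_eq_iff₀ hba]
    linear_combination (norm := module) h
  · rintro ⟨y, rfl, rfl⟩
    rw [smul_smul, ← neg_sub b a, neg_mul, mul_inv_cancel₀ hba, neg_one_smul, neg_add_cancel]

theorem finrank_ker_fromBlocks_smul_one_sub_left (hab : a ≠ b) :
    Module.finrank K (LinearMap.ker
      (fromBlocks (a • 1 : Matrix n n K) W 0 (b • 1 : Matrix m m K) - a • 1).mulVecLin) =
      Fintype.card n := by
  rw [ker_fromBlocks_smul_one_sub_left a b W hab,
    LinearMap.finrank_range_of_inj (mulVec_fromRows_one_left_injective 0),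
    Module.finrank_fintype_fun_eq_card]

theorem finrank_ker_fromBlocks_smul_one_sub_right (hab : a ≠ b) :
    Module.finrank K (LinearMap.ker
      (fromBlocks (a • 1 : Matrix n n K) W 0 (b • 1 : Matrix m m K) - b • 1).mulVecLin) =
      Fintype.card m := by
  rw [ker_fromBlocks_smul_one_sub_right a b W hab,
    LinearMap.finrank_range_of_inj (mulVec_fromRows_one_right_injective _),
    Module.finrank_fintype_fun_eq_card]

end BlockTriangular

end Matrix

open Matrix

theorem racp_ideal_eigenvalues_general
    (n m : ℕ)
    (A : Matrix (Fin n) (Fin n) ℝ) (hA : A.PosDef)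
    (B : Matrix (Fin n) (Fin m) ℝ) (hB : B.rank = m)
    (C : Matrix (Fin m) (Fin m) ℝ) (hC : C = Bᵀ * A⁻¹ * B)
    (𝒜 : Matrix (Fin n ⊕ Fin m) (Fin n ⊕ Fin m) ℝ)
    (h𝒜 : 𝒜 = Matrix.fromBlocks A B Bᵀ 0)
    (𝒜hat : Matrix (Fin n ⊕ Fin m) (Fin n ⊕ Fin m) ℝ)
    (h𝒜hat : 𝒜hat = Matrix.fromBlocks A B Bᵀ (-C))
    (P : Matrix (Fin n ⊕ Fin m) (Fin n ⊕ Fin m) ℂ)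
    (hP : P = (𝒜hat⁻¹ * 𝒜).map Complex.ofReal) :
    (∀ μ : ℂ, (∃ v : Fin n ⊕ Fin m → ℂ, v ≠ 0 ∧ P *ᵥ v = μ • v) →
      μ = 1 ∨ μ = 1 / 2) ∧
    Module.finrank ℂ (LinearMap.ker ((P - (1 : ℂ) • 1).mulVecLin)) = n ∧
    Module.finrank ℂ (LinearMap.ker ((P - ((1 : ℂ) / 2) • 1).mulVecLin)) = m := by
  subst hC h𝒜 h𝒜hat hP
  have hBinj := mulVec_injective_of_rank_eq_card (hB.trans (Fintype.card_fin m).symm)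
  have hS : (Bᵀ * A⁻¹ * B).PosDef := by
    simpa only [conjTranspose_eq_transpose_of_trivial] using
      hA.inv.conjTranspose_mul_mul_same hBinj
  have hP : ((fromBlocks A B Bᵀ (-(Bᵀ * A⁻¹ * B)))⁻¹ * fromBlocks A B Bᵀ 0).map Complex.ofReal =
      fromBlocks ((1 : ℂ) • 1) (((2⁻¹ : ℝ) • (A⁻¹ * B)).map Complex.ofReal) 0
        (((1 : ℂ) / 2) • 1) := by
    rw [fromBlocks_neg_schur_inv_mul B Bᵀ hA.det_pos.ne'.isUnit hS.det_pos.ne'.isUnit two_ne_zero,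
      fromBlocks_map]
    congr 1 <;> ext i j <;> by_cases h : i = j <;> simp [one_apply, h]
  have hab : (1 : ℂ) ≠ 1 / 2 := by norm_num
  rw [hP]
  refine ⟨fun μ ⟨v, hv, h⟩ => eq_or_eq_of_fromBlocks_smul_one_mulVec_eq_smul _ _ _ hv h, ?_, ?_⟩
  · rw [finrank_ker_fromBlocks_smul_one_sub_left _ _ _ hab, Fintype.card_fin]
  · rw [finrank_ker_fromBlocks_smul_one_sub_right _ _ _ hab, Fintype.card_fin]

/-- Theorem 2.1: with `C = BᵀA⁻¹B`, every eigenvalue of `𝒜̂⁻¹𝒜` is `1`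
(with multiplicity `n`) or `1/2` (with multiplicity `m`). -/
theorem racp_ideal_eigenvalues
    (n m : ℕ) (hmn : m < n)
    (A : Matrix (Fin n) (Fin n) ℝ) (hA : A.PosDef)
    (B : Matrix (Fin n) (Fin m) ℝ) (hB : B.rank = m)
    (C : Matrix (Fin m) (Fin m) ℝ) (hC : C = Bᵀ * A⁻¹ * B)
    (𝒜 : Matrix (Fin n ⊕ Fin m) (Fin n ⊕ Fin m) ℝ)
    (h𝒜 : 𝒜 = Matrix.fromBlocks A B Bᵀ 0)
    (𝒜hat : Matrix (Fin n ⊕ Fin m) (Fin n ⊕ Fin m) ℝ)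
    (h𝒜hat : 𝒜hat = Matrix.fromBlocks A B Bᵀ (-C))
    (P : Matrix (Fin n ⊕ Fin m) (Fin n ⊕ Fin m) ℂ)
    (hP : P = (𝒜hat⁻¹ * 𝒜).map Complex.ofReal) :
    (∀ μ : ℂ, (∃ v : Fin n ⊕ Fin m → ℂ, v ≠ 0 ∧ P *ᵥ v = μ • v) →
      μ = 1 ∨ μ = 1 / 2) ∧
    Module.finrank ℂ (LinearMap.ker ((P - (1 : ℂ) • 1).mulVecLin)) = n ∧
    Module.finrank ℂ (LinearMap.ker ((P - ((1 : ℂ) / 2) • 1).mulVecLin)) = m :=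
  racp_ideal_eigenvalues_general n m A hA B hB C hC 𝒜 h𝒜 𝒜hat h𝒜hat P hP
end

section
/- Let A be an n×n symmetric positive definite matrix, B an n×m matrix of full column rank (m < n), and C = BᵀA⁻¹B. With 𝒜 = [[A, B],[Bᵀ, 0]] and 𝒜̄ = [[A, B],[-Bᵀ, C]], every eigenvalue of 𝒜̄⁻¹𝒜 is either 1 (with multiplicity n) or -1/2 (with multiplicity m). -/
/-!
With `K = A⁻¹B` and `R = C⁻¹Bᵀ` one has `RK = 1`, and `𝒜̄⁻¹𝒜` is the explicit block matrix
`[[1 - KR, K/2], [R, 1/2]]`. This matrix is annihilated by `(X - 1)(X + 1/2)`, which confines the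
eigenvalues. The columns of `[1; 2R]` and of `[K; -1]` are `n` and `m` independent eigenvectors for
`1` and `-1/2`, and since eigenspaces of distinct eigenvalues meet trivially these counts are exact.
-/

open Matrix

section Eigen

variable {𝕜 ι κ : Type*} [Field 𝕜] [Fintype ι] [Fintype κ] [DecidableEq ι]

theorem eq_or_eq_of_mul_sub_smul_one_eq_zero {P : Matrix ι ι 𝕜} {a b μ : 𝕜}
    (hP : (P - a • 1) * (P - b • 1) = 0) {v : ι → 𝕜} (hv : v ≠ 0) (hPv : P *ᵥ v = μ • v) :
    μ = a ∨ μ = b := by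
  have hsub : ∀ c : 𝕜, (P - c • 1) *ᵥ v = (μ - c) • v := fun c => by
    rw [sub_mulVec, smul_mulVec, one_mulVec, hPv, sub_smul]
  have h : ((μ - a) * (μ - b)) • v = 0 :=
    calc ((μ - a) * (μ - b)) • v = (P - a • 1) *ᵥ ((P - b • 1) *ᵥ v) := by
          rw [hsub b, mulVec_smul, hsub a, smul_smul, mul_comm]
      _ = 0 := by rw [mulVec_mulVec, hP, zero_mulVec]
  simpa [hv, sub_eq_zero] using h

omit [DecidableEq ι] in
theorem card_le_finrank_ker_mulVecLin {ι' : Type*} {S : Matrix ι' ι 𝕜} {M : Matrix ι κ 𝕜}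
    {L : Matrix κ ι 𝕜} [DecidableEq κ] (hLM : L * M = 1) (hSM : S * M = 0) :
    Fintype.card κ ≤ Module.finrank 𝕜 (LinearMap.ker S.mulVecLin) := by
  have hinj : Function.Injective M.mulVecLin := fun x y hxy => by
    simpa [mulVec_mulVec, hLM] using congrArg (L *ᵥ ·) hxy
  have hrange : LinearMap.range M.mulVecLin ≤ LinearMap.ker S.mulVecLin := by
    rw [LinearMap.range_le_ker_iff, ← mulVecLin_mul, hSM, mulVecLin_zero]
  calc Fintype.card κ = Module.finrank 𝕜 (LinearMap.range M.mulVecLin) := by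
        rw [LinearMap.finrank_range_of_inj hinj, Module.finrank_fintype_fun_eq_card]
    _ ≤ _ := Submodule.finrank_mono hrange

theorem finrank_ker_sub_smul_one_add_le {P : Matrix ι ι 𝕜} {a b : 𝕜} (hab : a ≠ b) :
    Module.finrank 𝕜 (LinearMap.ker (P - a • 1).mulVecLin) +
      Module.finrank 𝕜 (LinearMap.ker (P - b • 1).mulVecLin) ≤ Fintype.card ι := by
  have hdisj : LinearMap.ker (P - a • 1).mulVecLin ⊓ LinearMap.ker (P - b • 1).mulVecLin = ⊥ := by
    refine (Submodule.eq_bot_iff _).mpr fun v ⟨ha, hb⟩ => ?_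
    simp only [SetLike.mem_coe, LinearMap.mem_ker, mulVecLin_apply, sub_mulVec, smul_mulVec,
      one_mulVec, sub_eq_zero] at ha hb
    have h : (a - b) • v = 0 := by rw [sub_smul, ← ha, ← hb, sub_self]
    simpa [sub_eq_zero, hab] using h
  rw [← Submodule.finrank_sup_add_finrank_inf_eq, hdisj, finrank_bot, add_zero,
    ← Module.finrank_fintype_fun_eq_card 𝕜]
  exact Submodule.finrank_le _

end Eigen

section Ideal

variable {𝕜 ι κ : Type*} [Field 𝕜] [Fintype ι] [Fintype κ] [DecidableEq ι] [DecidableEq κ]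

def idealPreconditioned (K : Matrix ι κ 𝕜) (R : Matrix κ ι 𝕜) : Matrix (ι ⊕ κ) (ι ⊕ κ) 𝕜 :=
  fromBlocks (1 - K * R) ((1 / 2 : 𝕜) • K) R ((1 / 2 : 𝕜) • 1)

omit [Fintype ι] in
theorem idealPreconditioned_map {𝕜' : Type*} [Field 𝕜'] (f : 𝕜 →+* 𝕜') (K : Matrix ι κ 𝕜)
    (R : Matrix κ ι 𝕜) :
    (idealPreconditioned K R).map f = idealPreconditioned (K.map f) (R.map f) := by
  ext (i | i) (j | j) <;>
    simp [idealPreconditioned, Matrix.one_apply, Matrix.mul_apply, apply_ite f, map_ofNat]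

omit [Fintype ι] in
theorem idealPreconditioned_sub_smul_one (K : Matrix ι κ 𝕜) (R : Matrix κ ι 𝕜) (c : 𝕜) :
    idealPreconditioned K R - c • 1 =
      fromBlocks ((1 - c) • 1 - K * R) ((1 / 2 : 𝕜) • K) R ((1 / 2 - c) • 1) := by
  rw [idealPreconditioned, ← fromBlocks_one, fromBlocks_smul, sub_eq_add_neg, fromBlocks_neg,
    fromBlocks_add]
  congr 1 <;> module

variable [CharZero 𝕜] {K : Matrix ι κ 𝕜} {R : Matrix κ ι 𝕜}

theorem fromBlocks_neg_mul_idealPreconditioned {A : Matrix ι ι 𝕜} {B : Matrix ι κ 𝕜}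
    {C : Matrix κ κ 𝕜} {D : Matrix κ ι 𝕜} (hAK : A * K = B) (hDK : D * K = C) (hCR : C * R = D) :
    fromBlocks A B (-D) C * idealPreconditioned K R = fromBlocks A B D 0 := by
  rw [idealPreconditioned, fromBlocks_multiply]
  simp only [Matrix.mul_sub, Matrix.mul_smul, Matrix.neg_mul, Matrix.mul_one, ← Matrix.mul_assoc,
    hAK, hDK, hCR]
  congr 1 <;> module

theorem idealPreconditioned_sub_one_mul_add_half (hRK : R * K = 1) :
    (idealPreconditioned K R - (1 : 𝕜) • 1) * (idealPreconditioned K R - (-(1 / 2) : 𝕜) • 1) =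
      0 := by
  have hRKR : R * (K * R) = R := by rw [← Matrix.mul_assoc, hRK, Matrix.one_mul]
  rw [idealPreconditioned_sub_smul_one, idealPreconditioned_sub_smul_one, fromBlocks_multiply,
    ← fromBlocks_zero]
  simp only [Matrix.sub_mul, Matrix.mul_sub, Matrix.smul_mul, Matrix.mul_smul, Matrix.one_mul,
    Matrix.mul_one, Matrix.mul_assoc, hRKR, hRK]
  congr 1 <;> module

theorem idealPreconditioned_sub_one_mul_fromRows :
    (idealPreconditioned K R - (1 : 𝕜) • 1) * fromRows (1 : Matrix ι ι 𝕜) ((2 : 𝕜) • R) = 0 := by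
  rw [idealPreconditioned_sub_smul_one, fromBlocks_mul_fromRows, ← fromRows_zero]
  simp only [Matrix.smul_mul, Matrix.mul_smul, Matrix.one_mul, Matrix.mul_one]
  congr 1 <;> module

theorem idealPreconditioned_add_half_mul_fromRows (hRK : R * K = 1) :
    (idealPreconditioned K R - (-(1 / 2) : 𝕜) • 1) * fromRows K (-1 : Matrix κ κ 𝕜) = 0 := by
  rw [idealPreconditioned_sub_smul_one, fromBlocks_mul_fromRows, ← fromRows_zero]
  simp only [Matrix.sub_mul, Matrix.smul_mul, Matrix.one_mul, Matrix.mul_neg, Matrix.mul_one,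
    Matrix.mul_assoc, hRK]
  congr 1 <;> module

theorem finrank_ker_idealPreconditioned (hRK : R * K = 1) :
    Module.finrank 𝕜 (LinearMap.ker (idealPreconditioned K R - (1 : 𝕜) • 1).mulVecLin) =
        Fintype.card ι ∧
      Module.finrank 𝕜 (LinearMap.ker (idealPreconditioned K R - (-(1 / 2) : 𝕜) • 1).mulVecLin) =
        Fintype.card κ := by
  have hι := card_le_finrank_ker_mulVecLin (L := fromCols 1 0) (by simp [fromCols_mul_fromRows])
    (idealPreconditioned_sub_one_mul_fromRows (K := K) (R := R))
  have hκ := card_le_finrank_ker_mulVecLin (L := fromCols 0 (-1)) (by simp [fromCols_mul_fromRows])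
    (idealPreconditioned_add_half_mul_fromRows hRK)
  have hsum := finrank_ker_sub_smul_one_add_le (P := idealPreconditioned K R) (a := 1)
    (b := -(1 / 2)) (by norm_num)
  rw [Fintype.card_sum] at hsum
  omega

end Ideal

theorem Matrix.mulVec_injective_of_rank_eq_card_s1 {𝕜 ι κ : Type*} [Field 𝕜] [Fintype κ]
    {B : Matrix ι κ 𝕜} (h : B.rank = Fintype.card κ) : Function.Injective B.mulVec :=
  mulVec_injective_iff.mpr <| linearIndependent_iff_card_eq_finrank_span.mpr <| by
    rw [Set.finrank, ← rank_eq_finrank_span_cols, h]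

section Real

variable {ι κ : Type*} [Fintype ι] [Fintype κ] [DecidableEq ι] [DecidableEq κ]
  {A : Matrix ι ι ℝ} {B : Matrix ι κ ℝ}

omit [DecidableEq κ] in
theorem Matrix.PosDef.transpose_mul_inv_mul (hA : A.PosDef) (hB : Function.Injective B.mulVec) :
    (Bᵀ * A⁻¹ * B).PosDef := by
  simpa [conjTranspose_eq_transpose_of_trivial] using hA.inv.conjTranspose_mul_mul_same hB

theorem isUnit_fromBlocks_neg_transpose (hA : A.PosDef) (hB : Function.Injective B.mulVec) :
    IsUnit (fromBlocks A B (-Bᵀ) (Bᵀ * A⁻¹ * B)) := by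
  have : Invertible A := hA.isUnit.invertible
  -- the Schur complement of `A` is `2 Bᵀ A⁻¹ B`
  rw [isUnit_fromBlocks_iff_of_invertible₁₁, invOf_eq_nonsing_inv, Matrix.neg_mul, Matrix.neg_mul,
    sub_neg_eq_add]
  exact ((hA.transpose_mul_inv_mul hB).add (hA.transpose_mul_inv_mul hB)).isUnit

theorem inv_fromBlocks_neg_transpose_mul_fromBlocks (hA : A.PosDef)
    (hB : Function.Injective B.mulVec) :
    (fromBlocks A B (-Bᵀ) (Bᵀ * A⁻¹ * B))⁻¹ * fromBlocks A B Bᵀ 0 =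
      idealPreconditioned (A⁻¹ * B) ((Bᵀ * A⁻¹ * B)⁻¹ * Bᵀ) := by
  have hCdet := (isUnit_iff_isUnit_det _).mp (hA.transpose_mul_inv_mul hB).isUnit
  have hAK : A * (A⁻¹ * B) = B :=
    mul_nonsing_inv_cancel_left _ _ ((isUnit_iff_isUnit_det _).mp hA.isUnit)
  have hDK : Bᵀ * (A⁻¹ * B) = Bᵀ * A⁻¹ * B := (Matrix.mul_assoc _ _ _).symm
  have hCR := mul_nonsing_inv_cancel_left _ Bᵀ hCdet
  rw [← fromBlocks_neg_mul_idealPreconditioned hAK hDK hCR, nonsing_inv_mul_cancel_left _ _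
    ((isUnit_iff_isUnit_det _).mp (isUnit_fromBlocks_neg_transpose hA hB))]

end Real

theorem racp_alternative_ideal_eigenvalues_general
    (n m : ℕ)
    (A : Matrix (Fin n) (Fin n) ℝ) (hA : A.PosDef)
    (B : Matrix (Fin n) (Fin m) ℝ) (hB : B.rank = m)
    (C : Matrix (Fin m) (Fin m) ℝ) (hC : C = Bᵀ * A⁻¹ * B)
    (𝒜 : Matrix (Fin n ⊕ Fin m) (Fin n ⊕ Fin m) ℝ)
    (h𝒜 : 𝒜 = Matrix.fromBlocks A B Bᵀ 0)
    (𝒜bar : Matrix (Fin n ⊕ Fin m) (Fin n ⊕ Fin m) ℝ)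
    (h𝒜bar : 𝒜bar = Matrix.fromBlocks A B (-Bᵀ) C)
    (P : Matrix (Fin n ⊕ Fin m) (Fin n ⊕ Fin m) ℂ)
    (hP : P = (𝒜bar⁻¹ * 𝒜).map Complex.ofReal) :
    (∀ μ : ℂ, (∃ v : Fin n ⊕ Fin m → ℂ, v ≠ 0 ∧ P *ᵥ v = μ • v) →
      μ = 1 ∨ μ = -(1 / 2)) ∧
    Module.finrank ℂ (LinearMap.ker ((P - (1 : ℂ) • 1).mulVecLin)) = n ∧
    Module.finrank ℂ (LinearMap.ker ((P - (-((1 : ℂ) / 2)) • 1).mulVecLin)) = m := by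
  have hBinj : Function.Injective B.mulVec := mulVec_injective_of_rank_eq_card_s1 (by simpa using hB)
  have hCdet : IsUnit C.det :=
    (isUnit_iff_isUnit_det _).mp (hC ▸ hA.transpose_mul_inv_mul hBinj).isUnit
  have hRK : C⁻¹ * Bᵀ * (A⁻¹ * B) = 1 := by
    rw [Matrix.mul_assoc, ← Matrix.mul_assoc Bᵀ, ← hC, nonsing_inv_mul _ hCdet]
  have hRKc : (C⁻¹ * Bᵀ).map Complex.ofRealHom * (A⁻¹ * B).map Complex.ofRealHom = 1 := by
    rw [← Matrix.map_mul, hRK, Matrix.map_one _ (map_zero _) (map_one _)]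
  have hPideal : P = idealPreconditioned ((A⁻¹ * B).map Complex.ofRealHom)
      ((C⁻¹ * Bᵀ).map Complex.ofRealHom) := by
    rw [hP, h𝒜bar, h𝒜, hC, inv_fromBlocks_neg_transpose_mul_fromBlocks hA hBinj, ← hC]
    exact idealPreconditioned_map Complex.ofRealHom _ _
  subst hPideal
  refine ⟨fun μ ⟨v, hv, hPv⟩ => eq_or_eq_of_mul_sub_smul_one_eq_zero
    (idealPreconditioned_sub_one_mul_add_half hRKc) hv hPv, ?_⟩
  simpa using finrank_ker_idealPreconditioned hRKc

/-- Theorem 2.4 (ideal case): with `C = BᵀA⁻¹B`, every eigenvalue of `𝒜̄⁻¹𝒜` is `1`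
(with multiplicity `n`) or `-1/2` (with multiplicity `m`). -/
theorem racp_alternative_ideal_eigenvalues
    (n m : ℕ) (hmn : m < n)
    (A : Matrix (Fin n) (Fin n) ℝ) (hA : A.PosDef)
    (B : Matrix (Fin n) (Fin m) ℝ) (hB : B.rank = m)
    (C : Matrix (Fin m) (Fin m) ℝ) (hC : C = Bᵀ * A⁻¹ * B)
    (𝒜 : Matrix (Fin n ⊕ Fin m) (Fin n ⊕ Fin m) ℝ)
    (h𝒜 : 𝒜 = Matrix.fromBlocks A B Bᵀ 0)
    (𝒜bar : Matrix (Fin n ⊕ Fin m) (Fin n ⊕ Fin m) ℝ)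
    (h𝒜bar : 𝒜bar = Matrix.fromBlocks A B (-Bᵀ) C)
    (P : Matrix (Fin n ⊕ Fin m) (Fin n ⊕ Fin m) ℂ)
    (hP : P = (𝒜bar⁻¹ * 𝒜).map Complex.ofReal) :
    (∀ μ : ℂ, (∃ v : Fin n ⊕ Fin m → ℂ, v ≠ 0 ∧ P *ᵥ v = μ • v) →
      μ = 1 ∨ μ = -(1 / 2)) ∧
    Module.finrank ℂ (LinearMap.ker ((P - (1 : ℂ) • 1).mulVecLin)) = n ∧
    Module.finrank ℂ (LinearMap.ker ((P - (-((1 : ℂ) / 2)) • 1).mulVecLin)) = m :=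
  racp_alternative_ideal_eigenvalues_general n m A hA B hB C hC 𝒜 h𝒜 𝒜bar h𝒜bar P hP
end

section
/- Let A be n×n symmetric positive definite, B an n×m full-column-rank matrix (m < n), C an m×m symmetric positive definite matrix, 𝒜 = [[A, B],[Bᵀ, 0]] and 𝒜̂ = [[A, B],[Bᵀ, -C]], 𝒜̄ = [[A, B],[-Bᵀ, C]]. If λ ≠ 1 is an eigenvalue of 𝒜̂⁻¹𝒜, then -λ is an eigenvalue of 𝒜̄⁻¹𝒜; that is, the non-unitary eigenvalues of 𝒜̄⁻¹𝒜 are the opposites of the non-unitary eigenvalues of 𝒜̂⁻¹𝒜. -/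
open Matrix

/-- Theorem 2.4: the non-unitary eigenvalues of `𝒜̄⁻¹𝒜` are the opposites of the
non-unitary eigenvalues of `𝒜̂⁻¹𝒜`. -/
theorem racp_nonunitary_eigenvalues_opposite
    (n m : ℕ) (hmn : m < n)
    (A : Matrix (Fin n) (Fin n) ℝ) (hA : A.PosDef)
    (B : Matrix (Fin n) (Fin m) ℝ) (hB : B.rank = m)
    (C : Matrix (Fin m) (Fin m) ℝ) (hC : C.PosDef)
    (𝒜 : Matrix (Fin n ⊕ Fin m) (Fin n ⊕ Fin m) ℝ)
    (h𝒜 : 𝒜 = Matrix.fromBlocks A B Bᵀ 0)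
    (𝒜hat : Matrix (Fin n ⊕ Fin m) (Fin n ⊕ Fin m) ℝ)
    (h𝒜hat : 𝒜hat = Matrix.fromBlocks A B Bᵀ (-C))
    (𝒜bar : Matrix (Fin n ⊕ Fin m) (Fin n ⊕ Fin m) ℝ)
    (h𝒜bar : 𝒜bar = Matrix.fromBlocks A B (-Bᵀ) C) :
    ∀ lam : ℂ, lam ≠ 1 →
      (∃ v : Fin n ⊕ Fin m → ℂ, v ≠ 0 ∧
        ((𝒜hat⁻¹ * 𝒜).map Complex.ofReal) *ᵥ v = lam • v) →
      (∃ w : Fin n ⊕ Fin m → ℂ, w ≠ 0 ∧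
        ((𝒜bar⁻¹ * 𝒜).map Complex.ofReal) *ᵥ w = (-lam) • w) := by
  rintro lam hlam ⟨v, hv0, hv⟩
  -- real invertibility facts
  have hdetA : A.det ≠ 0 := ne_of_gt hA.det_pos
  have hAinv : Invertible A := A.invertibleOfIsUnitDet (isUnit_iff_ne_zero.mpr hdetA)
  have hS : (C + Bᵀ * A⁻¹ * B).PosDef := by
    refine hC.add_posSemidef ?_
    have h1 : (A⁻¹).PosDef := hA.inv
    have h2 := h1.posSemidef.conjTranspose_mul_mul_same B
    simpa using h2
  have hdetS : (C + Bᵀ * A⁻¹ * B).det ≠ 0 := ne_of_gt hS.det_pos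
  have hdethat : IsUnit 𝒜hat.det := by
    rw [h𝒜hat, det_fromBlocks₁₁]
    have e : -C - Bᵀ * ⅟A * B = -(C + Bᵀ * A⁻¹ * B) := by
      rw [invOf_eq_nonsing_inv]; abel
    rw [e, det_neg]
    exact isUnit_iff_ne_zero.mpr
      (mul_ne_zero hdetA (mul_ne_zero (pow_ne_zero _ (by norm_num)) hdetS))
  have hdetbar : IsUnit 𝒜bar.det := by
    rw [h𝒜bar, det_fromBlocks₁₁]
    have e : C - (-Bᵀ) * ⅟A * B = C + Bᵀ * A⁻¹ * B := by
      rw [invOf_eq_nonsing_inv, Matrix.neg_mul, Matrix.neg_mul, sub_neg_eq_add]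
    rw [e]
    exact (isUnit_iff_ne_zero).mpr (mul_ne_zero hdetA hdetS)
  -- complex matrices
  set f : ℝ →+* ℂ := Complex.ofRealHom with hf
  have hmap : ∀ (M N : Matrix (Fin n ⊕ Fin m) (Fin n ⊕ Fin m) ℝ),
      (M * N).map Complex.ofReal = (M.map Complex.ofReal) * (N.map Complex.ofReal) := by
    intro M N
    exact Matrix.map_mul (f := f)
  -- from the eigen-equation, deduce 𝒜 v = lam • 𝒜hat v over ℂ
  have key : (𝒜.map Complex.ofReal) *ᵥ v = lam • ((𝒜hat.map Complex.ofReal) *ᵥ v) := by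
    have h1 : 𝒜hat * (𝒜hat⁻¹ * 𝒜) = 𝒜 := by
      rw [← mul_assoc, mul_nonsing_inv _ hdethat, one_mul]
    calc (𝒜.map Complex.ofReal) *ᵥ v
        = ((𝒜hat * (𝒜hat⁻¹ * 𝒜)).map Complex.ofReal) *ᵥ v := by rw [h1]
      _ = (𝒜hat.map Complex.ofReal) *ᵥ (((𝒜hat⁻¹ * 𝒜).map Complex.ofReal) *ᵥ v) := by
          rw [hmap, mulVec_mulVec]
      _ = (𝒜hat.map Complex.ofReal) *ᵥ (lam • v) := by rw [hv]
      _ = lam • ((𝒜hat.map Complex.ofReal) *ᵥ v) := mulVec_smul _ _ _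
  -- block analysis
  set x : Fin n → ℂ := v ∘ Sum.inl with hx
  set y : Fin m → ℂ := v ∘ Sum.inr with hy
  set A' := A.map Complex.ofReal with hA'
  set B' := B.map Complex.ofReal with hB'
  set C' := C.map Complex.ofReal with hC'
  have hvelim : v = Sum.elim x y := (Sum.elim_comp_inl_inr v).symm
  have hmap𝒜 : 𝒜.map Complex.ofReal = fromBlocks A' B' B'ᵀ 0 := by
    rw [h𝒜, fromBlocks_map]
    simp [hA', hB', Matrix.transpose_map]
  have hmaphat : 𝒜hat.map Complex.ofReal = fromBlocks A' B' B'ᵀ (-C') := by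
    rw [h𝒜hat, fromBlocks_map]
    have : (-C).map Complex.ofReal = -(C.map Complex.ofReal) := by
      ext i j; simp
    simp [hA', hB', hC', Matrix.transpose_map, this]
  have hmapbar : 𝒜bar.map Complex.ofReal = fromBlocks A' B' (-B'ᵀ) C' := by
    rw [h𝒜bar, fromBlocks_map]
    have : (-Bᵀ).map Complex.ofReal = -((B.map Complex.ofReal)ᵀ) := by
      ext i j; simp [Matrix.transpose_map]
    simp [hA', hB', hC', Matrix.transpose_map, this]
  -- component equations
  have key1 : ∀ i, (A' *ᵥ x + B' *ᵥ y) i = lam * (A' *ᵥ x + B' *ᵥ y) i := by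
    intro i
    have := congrFun key (Sum.inl i)
    rw [hmap𝒜, hmaphat, hvelim] at this
    simpa [fromBlocks_mulVec] using this
  have key2 : ∀ j, (B'ᵀ *ᵥ x) j = lam * ((B'ᵀ *ᵥ x) j - (C' *ᵥ y) j) := by
    intro j
    have := congrFun key (Sum.inr j)
    rw [hmap𝒜, hmaphat, hvelim] at this
    simpa [fromBlocks_mulVec, neg_mulVec, mul_sub, sub_eq_add_neg] using this
  have key1' : ∀ i, (A' *ᵥ x + B' *ᵥ y) i = 0 := by
    intro i
    have h := key1 i
    have h2 : (1 - lam) * (A' *ᵥ x + B' *ᵥ y) i = 0 := by ring_nf; linear_combination h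
    rcases mul_eq_zero.mp h2 with h3 | h3
    · exact absurd (by linear_combination -h3 : lam = 1) hlam
    · exact h3
  -- 𝒜 v = (-lam) • 𝒜bar v
  have key' : (𝒜.map Complex.ofReal) *ᵥ v = (-lam) • ((𝒜bar.map Complex.ofReal) *ᵥ v) := by
    rw [hmap𝒜, hmapbar, hvelim]
    funext i
    rcases i with i | j
    · simp only [fromBlocks_mulVec, Sum.elim_inl, Sum.elim_comp_inl, Sum.elim_comp_inr,
        Pi.smul_apply, smul_eq_mul]
      rw [key1' i]; ring
    · simp only [fromBlocks_mulVec, Sum.elim_inr, Sum.elim_comp_inl, Sum.elim_comp_inr,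
        Pi.smul_apply, smul_eq_mul, neg_mulVec, Pi.add_apply, Pi.neg_apply,
        zero_mulVec, add_zero]
      linear_combination key2 j
  -- conclude
  refine ⟨v, hv0, ?_⟩
  have hbar1 : (𝒜bar⁻¹.map Complex.ofReal) * (𝒜bar.map Complex.ofReal) = 1 := by
    rw [← hmap, nonsing_inv_mul _ hdetbar]
    simp
  calc ((𝒜bar⁻¹ * 𝒜).map Complex.ofReal) *ᵥ v
      = (𝒜bar⁻¹.map Complex.ofReal) *ᵥ ((𝒜.map Complex.ofReal) *ᵥ v) := by
        rw [hmap, mulVec_mulVec]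
    _ = (𝒜bar⁻¹.map Complex.ofReal) *ᵥ ((-lam) • ((𝒜bar.map Complex.ofReal) *ᵥ v)) := by
        rw [key']
    _ = (-lam) • ((𝒜bar⁻¹.map Complex.ofReal) *ᵥ ((𝒜bar.map Complex.ofReal) *ᵥ v)) :=
        mulVec_smul _ _ _
    _ = (-lam) • v := by rw [mulVec_mulVec, hbar1, one_mulVec]
end

section
/- Let S̃_u and C be symmetric positive definite matrices of size n and m respectively, B an n×m real matrix, S_u = A + BC⁻¹Bᵀ with A symmetric positive semidefinite. Define the preconditioner M⁻¹ = [[I,0],[C⁻¹Bᵀ,I]]·[[S̃_u⁻¹,0],[0,-C⁻¹]]·[[I,BC⁻¹],[0,I]] and 𝒜 = [[A,B],[Bᵀ,0]]. Then M⁻¹𝒜 is similar to the matrix [[S̃_u^{-1/2}(S_u + BC⁻¹Bᵀ)S̃_u^{-1/2}, S̃_u^{-1/2}BC^{-1/2}],[-C^{-1/2}BᵀS̃_u^{-1/2}, 0]]. -/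
/-!
Write `M⁻¹ = L D U` with `L = [[I,0],[C⁻¹Bᵀ,I]]`, `D = diag(S̃_u⁻¹, -C⁻¹)`, `U = [[I,BC⁻¹],[0,I]]`.
Conjugating by `L` moves it to the right of `𝒜`, and the two shears turn `𝒜` into
`U 𝒜 L = [[S_u + BC⁻¹Bᵀ, B],[Bᵀ, 0]]`. Since `S̃_u⁻¹ = S̃_u^{-1/2} S̃_u^{-1/2}` and
`C⁻¹ = C^{-1/2} C^{-1/2}`, a further conjugation by `diag(S̃_u^{-1/2}, C^{-1/2})` splits `D`
symmetrically around the saddle-point matrix. Hence `T = L · diag(S̃_u^{-1/2}, C^{-1/2})`.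
-/

open Matrix

section

open scoped ComplexOrder

/-- The positive semidefinite square root of a positive semidefinite matrix
(the Mathlib definition of December 2024, since removed from Mathlib). -/
noncomputable def Matrix.PosSemidef.sqrt {n : Type*} [Fintype n] [DecidableEq n] {𝕜 : Type*}
    [RCLike 𝕜] {A : Matrix n n 𝕜} (hA : A.PosSemidef) : Matrix n n 𝕜 :=
  hA.1.eigenvectorUnitary.1 * diagonal ((↑) ∘ (√·) ∘ hA.1.eigenvalues) *
  (star hA.1.eigenvectorUnitary : Matrix n n 𝕜)

end

namespace Matrix

section Blocks

variable {l m α : Type*} [Fintype l] [Fintype m] [Ring α]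

theorem fromBlocks_shear_mul_fromBlocks_zero₂₂_mul_fromBlocks_shear [DecidableEq l]
    [DecidableEq m] (A : Matrix l l α) (B : Matrix l m α) (Bt : Matrix m l α) (X : Matrix m m α) :
    fromBlocks 1 (B * X) 0 1 * fromBlocks A B Bt 0 * fromBlocks 1 0 (X * Bt) 1 =
      fromBlocks (A + B * X * Bt + B * X * Bt) B Bt 0 := by
  simp only [fromBlocks_multiply, Matrix.mul_one, Matrix.one_mul, Matrix.mul_zero,
    Matrix.zero_mul, add_zero, zero_add, Matrix.mul_assoc]

theorem fromBlocks_diagonal_mul_fromBlocks_zero₂₂_mul_fromBlocks_diagonal (P K : Matrix l l α)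
    (Q : Matrix m m α) (B : Matrix l m α) (Bt : Matrix m l α) :
    fromBlocks (P * P) 0 0 (-(Q * Q)) * fromBlocks K B Bt 0 * fromBlocks P 0 0 Q =
      fromBlocks P 0 0 Q * fromBlocks (P * K * P) (P * B * Q) (-(Q * Bt * P)) 0 := by
  simp only [fromBlocks_multiply, Matrix.mul_zero, Matrix.zero_mul, add_zero, zero_add,
    neg_zero, Matrix.neg_mul, Matrix.mul_neg, Matrix.mul_assoc]

end Blocks

section Sqrt

open scoped ComplexOrder

variable {n 𝕜 : Type*} [Fintype n] [DecidableEq n] [RCLike 𝕜] {A : Matrix n n 𝕜}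

theorem PosSemidef.sqrt_mul_self (hA : A.PosSemidef) : hA.sqrt * hA.sqrt = A := by
  have hU := Unitary.coe_star_mul_self hA.1.eigenvectorUnitary
  have hsq : diagonal ((↑) ∘ (√·) ∘ hA.1.eigenvalues) *
      diagonal ((↑) ∘ (√·) ∘ hA.1.eigenvalues) =
        (diagonal (RCLike.ofReal ∘ hA.1.eigenvalues) : Matrix n n 𝕜) := by
    rw [diagonal_mul_diagonal]
    congr 1
    funext i
    simp [← RCLike.ofReal_mul, Real.mul_self_sqrt (hA.eigenvalues_nonneg i)]
  conv_rhs => rw [hA.1.spectral_theorem, Unitary.conjStarAlgAut_apply]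
  unfold PosSemidef.sqrt
  rw [← hsq]
  simp only [Matrix.mul_assoc]
  rw [← Matrix.mul_assoc (star _ : Matrix n n 𝕜) (↑_), hU, Matrix.one_mul]

theorem PosSemidef.inv_sqrt_mul_inv_sqrt (hA : A.PosSemidef) : hA.sqrt⁻¹ * hA.sqrt⁻¹ = A⁻¹ := by
  rw [← Matrix.mul_inv_rev, hA.sqrt_mul_self]

theorem PosDef.isUnit_sqrt (hA : A.PosDef) : IsUnit hA.posSemidef.sqrt := by
  rw [← isUnit_mul_self_iff, hA.posSemidef.sqrt_mul_self]
  exact hA.isUnit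

end Sqrt

end Matrix

theorem racp_preconditioned_similar_general
    (n m : ℕ)
    (A : Matrix (Fin n) (Fin n) ℝ)
    (B : Matrix (Fin n) (Fin m) ℝ)
    (C : Matrix (Fin m) (Fin m) ℝ) (hC : C.PosDef)
    (Stilde : Matrix (Fin n) (Fin n) ℝ) (hStilde : Stilde.PosDef)
    (Su : Matrix (Fin n) (Fin n) ℝ) (hSu : Su = A + B * C⁻¹ * Bᵀ)
    (StHalfInv : Matrix (Fin n) (Fin n) ℝ)
    (hStHalfInv : StHalfInv = (hStilde.posSemidef.sqrt)⁻¹)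
    (CHalfInv : Matrix (Fin m) (Fin m) ℝ)
    (hCHalfInv : CHalfInv = (hC.posSemidef.sqrt)⁻¹)
    (Minv : Matrix (Fin n ⊕ Fin m) (Fin n ⊕ Fin m) ℝ)
    (hMinv : Minv =
      Matrix.fromBlocks 1 0 (C⁻¹ * Bᵀ) 1 *
      Matrix.fromBlocks Stilde⁻¹ 0 0 (-C⁻¹) *
      Matrix.fromBlocks 1 (B * C⁻¹) 0 1)
    (𝒜 : Matrix (Fin n ⊕ Fin m) (Fin n ⊕ Fin m) ℝ)
    (h𝒜 : 𝒜 = Matrix.fromBlocks A B Bᵀ 0) :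
    ∃ T : Matrix (Fin n ⊕ Fin m) (Fin n ⊕ Fin m) ℝ, IsUnit T ∧
      T⁻¹ * (Minv * 𝒜) * T =
        Matrix.fromBlocks
          (StHalfInv * (Su + B * C⁻¹ * Bᵀ) * StHalfInv)
          (StHalfInv * B * CHalfInv)
          (-(CHalfInv * Bᵀ * StHalfInv)) 0 := by
  subst hSu hMinv h𝒜
  set L : Matrix (Fin n ⊕ Fin m) (Fin n ⊕ Fin m) ℝ := fromBlocks 1 0 (C⁻¹ * Bᵀ) 1
  set E : Matrix (Fin n ⊕ Fin m) (Fin n ⊕ Fin m) ℝ := fromBlocks StHalfInv 0 0 CHalfInv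
  set R : Matrix (Fin n ⊕ Fin m) (Fin n ⊕ Fin m) ℝ :=
    fromBlocks (StHalfInv * (A + B * C⁻¹ * Bᵀ + B * C⁻¹ * Bᵀ) * StHalfInv)
      (StHalfInv * B * CHalfInv) (-(CHalfInv * Bᵀ * StHalfInv)) 0
  have hT : IsUnit (L * E) := by
    refine (isUnit_fromBlocks_zero₁₂.mpr ⟨isUnit_one, isUnit_one⟩).mul
      (isUnit_fromBlocks_zero₁₂.mpr ⟨?_, ?_⟩)
    · exact hStHalfInv ▸ isUnit_nonsing_inv_iff.mpr hStilde.isUnit_sqrt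
    · exact hCHalfInv ▸ isUnit_nonsing_inv_iff.mpr hC.isUnit_sqrt
  have hD : fromBlocks Stilde⁻¹ 0 0 (-C⁻¹) =
      fromBlocks (StHalfInv * StHalfInv) 0 0 (-(CHalfInv * CHalfInv)) := by
    rw [hStHalfInv, hCHalfInv, PosSemidef.inv_sqrt_mul_inv_sqrt, PosSemidef.inv_sqrt_mul_inv_sqrt]
  have intertwine : L * fromBlocks Stilde⁻¹ 0 0 (-C⁻¹) * fromBlocks 1 (B * C⁻¹) 0 1 *
      fromBlocks A B Bᵀ 0 * (L * E) = L * E * R := by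
    calc _ = L * (fromBlocks Stilde⁻¹ 0 0 (-C⁻¹) *
          (fromBlocks 1 (B * C⁻¹) 0 1 * fromBlocks A B Bᵀ 0 * L) * E) := by
          simp only [Matrix.mul_assoc]
      _ = L * (E * R) := by
          rw [fromBlocks_shear_mul_fromBlocks_zero₂₂_mul_fromBlocks_shear, hD,
            fromBlocks_diagonal_mul_fromBlocks_zero₂₂_mul_fromBlocks_diagonal]
      _ = L * E * R := (Matrix.mul_assoc _ _ _).symm
  refine ⟨L * E, hT, ?_⟩
  rw [Matrix.mul_assoc, intertwine,
    nonsing_inv_mul_cancel_left _ _ ((isUnit_iff_isUnit_det _).mp hT)]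

/-- The RACP preconditioned matrix `M⁻¹𝒜` is similar to a non-symmetric
saddle-point matrix (equation (13) of the paper). -/
theorem racp_preconditioned_similar
    (n m : ℕ)
    (A : Matrix (Fin n) (Fin n) ℝ) (hA : A.PosSemidef)
    (B : Matrix (Fin n) (Fin m) ℝ)
    (C : Matrix (Fin m) (Fin m) ℝ) (hC : C.PosDef)
    (Stilde : Matrix (Fin n) (Fin n) ℝ) (hStilde : Stilde.PosDef)
    (Su : Matrix (Fin n) (Fin n) ℝ) (hSu : Su = A + B * C⁻¹ * Bᵀ)
    (StHalfInv : Matrix (Fin n) (Fin n) ℝ)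
    (hStHalfInv : StHalfInv = (hStilde.posSemidef.sqrt)⁻¹)
    (CHalfInv : Matrix (Fin m) (Fin m) ℝ)
    (hCHalfInv : CHalfInv = (hC.posSemidef.sqrt)⁻¹)
    (Minv : Matrix (Fin n ⊕ Fin m) (Fin n ⊕ Fin m) ℝ)
    (hMinv : Minv =
      Matrix.fromBlocks 1 0 (C⁻¹ * Bᵀ) 1 *
      Matrix.fromBlocks Stilde⁻¹ 0 0 (-C⁻¹) *
      Matrix.fromBlocks 1 (B * C⁻¹) 0 1)
    (𝒜 : Matrix (Fin n ⊕ Fin m) (Fin n ⊕ Fin m) ℝ)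
    (h𝒜 : 𝒜 = Matrix.fromBlocks A B Bᵀ 0) :
    ∃ T : Matrix (Fin n ⊕ Fin m) (Fin n ⊕ Fin m) ℝ, IsUnit T ∧
      T⁻¹ * (Minv * 𝒜) * T =
        Matrix.fromBlocks
          (StHalfInv * (Su + B * C⁻¹ * Bᵀ) * StHalfInv)
          (StHalfInv * B * CHalfInv)
          (-(CHalfInv * Bᵀ * StHalfInv)) 0 :=
  racp_preconditioned_similar_general n m A B C hC Stilde hStilde Su hSu StHalfInv hStHalfInv
    CHalfInv hCHalfInv Minv hMinv 𝒜 h𝒜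
end

section
/- Let S̃_u and C be symmetric positive definite matrices of size n and m, A an n×n symmetric positive semidefinite matrix, B an n×m real matrix. Define M_a⁻¹ = [[I,0],[C⁻¹Bᵀ,I]]·[[S̃_u⁻¹,0],[0,C⁻¹]]·[[I,-BC⁻¹],[0,I]] and 𝒜 = [[A,B],[Bᵀ,0]]. Then M_a⁻¹𝒜 is similar to the symmetric matrix [[S̃_u^{-1/2} A S̃_u^{-1/2}, S̃_u^{-1/2}BC^{-1/2}],[C^{-1/2}BᵀS̃_u^{-1/2}, 0]], and hence all eigenvalues of M_a⁻¹𝒜 are real. -/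
/-!
Factor `M_a⁻¹ = L D U` with `L = [[I,0],[C⁻¹Bᵀ,I]]`, `U = [[I,-BC⁻¹],[0,I]]` and
`D = H²`, `H = diag(S̃_u^{-1/2}, C^{-1/2})`. Block elimination gives `U 𝒜 L = 𝒜`, so
`M_a⁻¹ 𝒜 (L H) = L H² (U 𝒜 L) H = (L H) (H 𝒜 H)`: the matrix `M_a⁻¹ 𝒜` is similar, through
`T = L H`, to the symmetric matrix `H 𝒜 H`. Conjugation preserves the complex spectrum, and the
spectrum of a Hermitian matrix is real.
-/

open Matrix

/-- The square root of a positive semidefinite matrix, as `Matrix.PosSemidef.sqrt` was defined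
in the older Mathlib (it has since been removed). -/
noncomputable def posSemidefSqrtOld {n : Type*} [Fintype n] [DecidableEq n]
    {M : Matrix n n ℝ} (hA : M.PosSemidef) : Matrix n n ℝ :=
  hA.1.eigenvectorUnitary.1 * diagonal ((↑) ∘ (√·) ∘ hA.1.eigenvalues) *
    (star hA.1.eigenvectorUnitary : Matrix n n ℝ)

open scoped MatrixOrder ComplexOrder

namespace Matrix

theorem posSemidefSqrtOld_eq_sqrt {n : Type*} [Fintype n] [DecidableEq n] {M : Matrix n n ℝ}
    (hM : M.PosSemidef) : posSemidefSqrtOld hM = CFC.sqrt M := by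
  rw [CFC.sqrt_eq_cfc, cfc_nnreal_eq_real _ M, hM.1.cfc_eq]
  simp [IsHermitian.cfc, posSemidefSqrtOld, Function.comp_def, hM.eigenvalues_nonneg]

section Sqrt

variable {𝕜 : Type*} [RCLike 𝕜] {n : Type*} [Fintype n] [DecidableEq n]

theorem PosSemidef.inv_sqrt_mul_inv_sqrt_s8 {S : Matrix n n 𝕜} (hS : S.PosSemidef) :
    (CFC.sqrt S)⁻¹ * (CFC.sqrt S)⁻¹ = S⁻¹ := by
  rw [← Matrix.mul_inv_rev, CFC.sqrt_mul_sqrt_self S hS.nonneg]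

theorem isHermitian_inv_sqrt (S : Matrix n n 𝕜) : (CFC.sqrt S)⁻¹.IsHermitian :=
  (CFC.sqrt_nonneg S).posSemidef.isHermitian.inv

theorem PosDef.isUnit_inv_sqrt {S : Matrix n n 𝕜} (hS : S.PosDef) :
    IsUnit (CFC.sqrt S)⁻¹ := by
  rw [isUnit_nonsing_inv_iff, CFC.isUnit_sqrt_iff S hS.posSemidef.nonneg]
  exact hS.isUnit

end Sqrt

section Saddle

variable {α : Type*} {n m : Type*} [Fintype n] [Fintype m] [Ring α]
  (A : Matrix n n α) (B : Matrix n m α) (B' : Matrix m n α)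

theorem fromBlocks_diag_mul_saddle_mul_diag (R : Matrix n n α) (N : Matrix m m α) :
    fromBlocks R 0 0 N * fromBlocks A B B' 0 * fromBlocks R 0 0 N =
      fromBlocks (R * A * R) (R * B * N) (N * B' * R) 0 := by
  simp [fromBlocks_multiply, Matrix.mul_assoc]

variable [DecidableEq n] [DecidableEq m] (G : Matrix m m α)

theorem fromBlocks_elim_mul_saddle_mul_elim :
    fromBlocks 1 (-(B * G)) 0 1 * fromBlocks A B B' 0 * fromBlocks 1 0 (G * B') 1 =
      fromBlocks A B B' 0 := by
  simp [fromBlocks_multiply, Matrix.mul_assoc]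

theorem semiconjBy_fromBlocks_preconditioned_saddle (R : Matrix n n α) (N : Matrix m m α) :
    SemiconjBy
      (fromBlocks 1 0 (G * B') 1 * fromBlocks R 0 0 N)
      (fromBlocks (R * A * R) (R * B * N) (N * B' * R) 0)
      (fromBlocks 1 0 (G * B') 1 * fromBlocks (R * R) 0 0 (N * N) *
        fromBlocks 1 (-(B * G)) 0 1 * fromBlocks A B B' 0) := by
  set L : Matrix (n ⊕ m) (n ⊕ m) α := fromBlocks 1 0 (G * B') 1
  set H : Matrix (n ⊕ m) (n ⊕ m) α := fromBlocks R 0 0 N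
  set U : Matrix (n ⊕ m) (n ⊕ m) α := fromBlocks 1 (-(B * G)) 0 1
  have hHH : fromBlocks (R * R) 0 0 (N * N) = H * H := by simp [H, fromBlocks_multiply]
  rw [SemiconjBy, ← fromBlocks_diag_mul_saddle_mul_diag, hHH]
  calc L * H * (H * fromBlocks A B B' 0 * H)
      = L * H * H * (U * fromBlocks A B B' 0 * L) * H := by
        rw [fromBlocks_elim_mul_saddle_mul_elim]; simp only [Matrix.mul_assoc]
    _ = L * (H * H) * U * fromBlocks A B B' 0 * (L * H) := by simp only [Matrix.mul_assoc]

end Saddle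

theorem inv_mul_mul_eq_of_semiconjBy {n α : Type*} [Fintype n] [DecidableEq n] [CommRing α]
    {T K X : Matrix n n α} (h : SemiconjBy T K X) (hT : IsUnit T) : T⁻¹ * X * T = K := by
  rw [Matrix.mul_assoc, ← h.eq, ← Matrix.mul_assoc,
    nonsing_inv_mul _ ((isUnit_iff_isUnit_det T).1 hT), Matrix.one_mul]

section Spectrum

variable {n : Type*} [Fintype n] [DecidableEq n]

theorem mem_spectrum_of_mulVec_eq_smul {K : Type*} [Field K] {M : Matrix n n K} {μ : K}
    {z : n → K} (hz : z ≠ 0) (h : M *ᵥ z = μ • z) : μ ∈ spectrum K M := by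
  rw [← spectrum_toLin', ← Module.End.hasEigenvalue_iff_mem_spectrum]
  exact Module.End.hasEigenvalue_of_hasEigenvector ⟨Module.End.mem_eigenspace_iff.2 h, hz⟩

theorem IsHermitian.im_eq_zero_of_mem_spectrum {M : Matrix n n ℂ} (hM : M.IsHermitian) {μ : ℂ}
    (h : μ ∈ spectrum ℂ M) : μ.im = 0 := by
  rw [hM.spectrum_eq_image_range] at h
  obtain ⟨r, -, rfl⟩ := h
  exact Complex.ofReal_im r

theorem spectrum_map_inv_mul_mul {R S : Type*} [CommRing R] [CommRing S] (f : R →+* S)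
    {T : Matrix n n R} (hT : IsUnit T) (X : Matrix n n R) :
    spectrum S ((T⁻¹ * X * T).map f) = spectrum S (X.map f) := by
  set u : (Matrix n n S)ˣ := Units.map f.mapMatrix.toMonoidHom hT.unit
  have hu : (T⁻¹ * X * T).map f = (u⁻¹ : (Matrix n n S)ˣ) * X.map f * u := by
    simp [u, ← map_inv, Matrix.coe_units_inv]
  rw [hu, spectrum.units_conjugate']

end Spectrum

end Matrix

/-- The alternative RACP preconditioned matrix `M_a⁻¹𝒜` is similar to a symmetric
matrix, hence has real spectrum. -/
theorem racp_alternative_preconditioned_similar_symmetric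
    (n m : ℕ)
    (A : Matrix (Fin n) (Fin n) ℝ) (hA : A.PosSemidef)
    (B : Matrix (Fin n) (Fin m) ℝ)
    (C : Matrix (Fin m) (Fin m) ℝ) (hC : C.PosDef)
    (Stilde : Matrix (Fin n) (Fin n) ℝ) (hStilde : Stilde.PosDef)
    (StHalfInv : Matrix (Fin n) (Fin n) ℝ)
    (hStHalfInv : StHalfInv = (posSemidefSqrtOld hStilde.posSemidef)⁻¹)
    (CHalfInv : Matrix (Fin m) (Fin m) ℝ)
    (hCHalfInv : CHalfInv = (posSemidefSqrtOld hC.posSemidef)⁻¹)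
    (Mainv : Matrix (Fin n ⊕ Fin m) (Fin n ⊕ Fin m) ℝ)
    (hMainv : Mainv =
      Matrix.fromBlocks 1 0 (C⁻¹ * Bᵀ) 1 *
      Matrix.fromBlocks Stilde⁻¹ 0 0 C⁻¹ *
      Matrix.fromBlocks 1 (-(B * C⁻¹)) 0 1)
    (𝒜 : Matrix (Fin n ⊕ Fin m) (Fin n ⊕ Fin m) ℝ)
    (h𝒜 : 𝒜 = Matrix.fromBlocks A B Bᵀ 0)
    (K : Matrix (Fin n ⊕ Fin m) (Fin n ⊕ Fin m) ℝ)
    (hK : K = Matrix.fromBlocks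
      (StHalfInv * A * StHalfInv) (StHalfInv * B * CHalfInv)
      (CHalfInv * Bᵀ * StHalfInv) 0) :
    (∃ T : Matrix (Fin n ⊕ Fin m) (Fin n ⊕ Fin m) ℝ, IsUnit T ∧
      T⁻¹ * (Mainv * 𝒜) * T = K) ∧ K.IsHermitian ∧
    (∀ lam : ℂ, (∃ z : Fin n ⊕ Fin m → ℂ, z ≠ 0 ∧
        ((Mainv * 𝒜).map Complex.ofReal) *ᵥ z = lam • z) → lam.im = 0) := by
  rw [posSemidefSqrtOld_eq_sqrt] at hStHalfInv hCHalfInv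
  have hRR : StHalfInv * StHalfInv = Stilde⁻¹ :=
    hStHalfInv ▸ hStilde.posSemidef.inv_sqrt_mul_inv_sqrt_s8
  have hNN : CHalfInv * CHalfInv = C⁻¹ := hCHalfInv ▸ hC.posSemidef.inv_sqrt_mul_inv_sqrt_s8
  have hRH : StHalfInv.IsHermitian := hStHalfInv ▸ isHermitian_inv_sqrt Stilde
  have hNH : CHalfInv.IsHermitian := hCHalfInv ▸ isHermitian_inv_sqrt C
  set H : Matrix (Fin n ⊕ Fin m) (Fin n ⊕ Fin m) ℝ := fromBlocks StHalfInv 0 0 CHalfInv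
  set T := fromBlocks 1 0 (C⁻¹ * Bᵀ) 1 * H
  have hT : IsUnit T := (isUnit_fromBlocks_zero₁₂.2 ⟨isUnit_one, isUnit_one⟩).mul
    (isUnit_fromBlocks_zero₁₂.2
      ⟨hStHalfInv ▸ hStilde.isUnit_inv_sqrt, hCHalfInv ▸ hC.isUnit_inv_sqrt⟩)
  have hsim : T⁻¹ * (Mainv * 𝒜) * T = K := by
    have h := semiconjBy_fromBlocks_preconditioned_saddle A B Bᵀ C⁻¹ StHalfInv CHalfInv
    rw [hRR, hNN, ← hMainv, ← h𝒜, ← hK] at h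
    exact inv_mul_mul_eq_of_semiconjBy h hT
  have hKH : K.IsHermitian := by
    have h𝒜H : 𝒜.IsHermitian := h𝒜 ▸ hA.isHermitian.fromBlocks
      (conjTranspose_eq_transpose_of_trivial B) isHermitian_zero
    have hH : H.IsHermitian := hRH.fromBlocks (by simp) hNH
    rw [hK, ← fromBlocks_diag_mul_saddle_mul_diag, ← h𝒜]
    simpa only [hH.eq] using isHermitian_conjTranspose_mul_mul H h𝒜H
  refine ⟨⟨T, hT, hsim⟩, hKH, fun lam ⟨z, hz, hzz⟩ => ?_⟩
  have hlam : lam ∈ spectrum ℂ ((Mainv * 𝒜).map Complex.ofRealHom) :=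
    mem_spectrum_of_mulVec_eq_smul hz hzz
  rw [← spectrum_map_inv_mul_mul Complex.ofRealHom hT, hsim] at hlam
  exact (hKH.map _ fun x => (Complex.conj_ofReal x).symm).im_eq_zero_of_mem_spectrum hlam
end

section
/- Let H = [[M, F],[Fᵀ, 0]] be a real symmetric block matrix where M is n×n symmetric positive definite and F is n×m of full column rank (m < n). Let α = λ_min(M), β = λ_max(M), σ₁ = σ_min(F), σ₂ = σ_max(F) (extreme singular values). Then every eigenvalue λ of H satisfies λ ∈ [(α - √(α² + 4σ₂²))/2, (β - √(β² + 4σ₁²))/2] ∪ [α, (β + √(β² + 4σ₂²))/2]. -/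
/-!
Write an eigenvector as `(x, y)`, so that `M x + F y = λ x` and `Fᵀ x = λ y`. Pairing the first
equation with `x` gives `xᵀ M x + λ ‖y‖² = λ ‖x‖²`, and `‖Fᵀ x‖² = λ² ‖y‖² ≤ σ₂² ‖x‖²`.
For `λ > 0` this yields `α ≤ λ` and `λ² ≤ β λ + σ₂²`. For `λ ≤ 0` it yields `λ² ≤ α λ + σ₂²`,
and expanding `σ₁² ‖y‖² ≤ ‖F y‖² = ‖λ x - M x‖²` with `‖M x‖² ≤ β xᵀ M x` yields
`σ₁² ≤ λ² - β λ`. Each quadratic inequality puts `λ` on the correct side of a root of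
`t² - c t - s`.
-/

open Matrix

theorem dotProduct_self_nonneg {ι R : Type*} [Fintype ι] [Ring R] [LinearOrder R]
    [IsStrictOrderedRing R] (x : ι → R) : 0 ≤ x ⬝ᵥ x :=
  Finset.sum_nonneg fun i _ => mul_self_nonneg (x i)

theorem dotProduct_self_pos {ι R : Type*} [Fintype ι] [Ring R] [LinearOrder R]
    [IsStrictOrderedRing R] {x : ι → R} (hx : x ≠ 0) : 0 < x ⬝ᵥ x :=
  (dotProduct_self_nonneg x).lt_of_ne' (dotProduct_self_eq_zero.not.mpr hx)

theorem dotProduct_sq_le_dotProduct_self_mul {ι R : Type*} [Fintype ι] [CommRing R] [LinearOrder R]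
    [IsStrictOrderedRing R] (u v : ι → R) : (u ⬝ᵥ v) ^ 2 ≤ (u ⬝ᵥ u) * (v ⬝ᵥ v) := by
  simpa only [dotProduct, sq] using Finset.sum_mul_sq_le_sq_mul_sq Finset.univ u v

theorem Matrix.fromBlocks_mulVec_sumElim_eq_smul_iff {ι κ R : Type*} [Fintype ι] [Fintype κ]
    [Semiring R] {A : Matrix ι ι R} {B : Matrix ι κ R} {C : Matrix κ ι R} {D : Matrix κ κ R}
    {x : ι → R} {y : κ → R} {c : R} :
    fromBlocks A B C D *ᵥ Sum.elim x y = c • Sum.elim x y ↔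
      A *ᵥ x + B *ᵥ y = c • x ∧ C *ᵥ x + D *ᵥ y = c • y := by
  simp only [fromBlocks_mulVec, funext_iff, Sum.forall, Sum.elim_inl, Sum.elim_inr, Pi.smul_apply]
  simp [Sum.elim_comp_inl, Sum.elim_comp_inr]

theorem Matrix.dotProduct_transpose_mul_self_mulVec {ι κ R : Type*} [Fintype ι] [Fintype κ]
    [CommSemiring R] (F : Matrix ι κ R) (y : κ → R) :
    y ⬝ᵥ ((Fᵀ * F) *ᵥ y) = (F *ᵥ y) ⬝ᵥ (F *ᵥ y) := by
  rw [← mulVec_mulVec, dotProduct_mulVec, ← mulVec_transpose, transpose_transpose]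

namespace Matrix.IsHermitian

variable {ι : Type*} [Fintype ι] [DecidableEq ι] {S : Matrix ι ι ℝ}

/-- `c` is the coordinate vector of `x` in an orthonormal eigenbasis of `S`. -/
theorem exists_eigenbasis_coords (hS : S.IsHermitian) (x : ι → ℝ) :
    ∃ c : ι → ℝ, x ⬝ᵥ x = ∑ i, c i ^ 2 ∧
      x ⬝ᵥ (S *ᵥ x) = ∑ i, hS.eigenvalues i * c i ^ 2 ∧
      (S *ᵥ x) ⬝ᵥ (S *ᵥ x) = ∑ i, hS.eigenvalues i ^ 2 * c i ^ 2 := by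
  set U : Matrix ι ι ℝ := (hS.eigenvectorUnitary : Matrix ι ι ℝ)
  have hUU : Uᵀ * U = 1 := by
    simpa [U, star_eq_conjTranspose] using (mem_unitaryGroup_iff').mp hS.eigenvectorUnitary.2
  set c := Uᵀ *ᵥ x
  have hx : U *ᵥ c = x := by rw [mulVec_mulVec, mul_eq_one_comm.mp hUU, one_mulVec]
  have hSx : S *ᵥ x = U *ᵥ (diagonal hS.eigenvalues *ᵥ c) := by
    conv_lhs => rw [hS.spectral_theorem]
    simp [U, c, mulVec_mulVec, star_eq_conjTranspose, Matrix.mul_assoc]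
  have isometry (w w' : ι → ℝ) : (U *ᵥ w) ⬝ᵥ (U *ᵥ w') = w ⬝ᵥ w' := by
    rw [dotProduct_mulVec, ← mulVec_transpose, mulVec_mulVec, hUU, one_mulVec]
  refine ⟨c, ?_, ?_, ?_⟩
  · rw [← hx, isometry]
    simp only [dotProduct, sq]
  · rw [hSx]
    nth_rw 1 [← hx]
    rw [isometry]
    simp only [dotProduct, mulVec_diagonal]
    exact Finset.sum_congr rfl fun i _ => by ring
  · rw [hSx, isometry]
    simp only [dotProduct, mulVec_diagonal]
    exact Finset.sum_congr rfl fun i _ => by ring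

theorem iInf_eigenvalues_mul_dotProduct_self_le (hS : S.IsHermitian) (x : ι → ℝ) :
    (⨅ i, hS.eigenvalues i) * (x ⬝ᵥ x) ≤ x ⬝ᵥ (S *ᵥ x) := by
  obtain ⟨c, hx, hSx, -⟩ := hS.exists_eigenbasis_coords x
  rw [hx, hSx, Finset.mul_sum]
  exact Finset.sum_le_sum fun i _ => mul_le_mul_of_nonneg_right
    (ciInf_le (Set.finite_range _).bddBelow i) (sq_nonneg _)

theorem dotProduct_mulVec_le_iSup_eigenvalues_mul (hS : S.IsHermitian) (x : ι → ℝ) :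
    x ⬝ᵥ (S *ᵥ x) ≤ (⨆ i, hS.eigenvalues i) * (x ⬝ᵥ x) := by
  obtain ⟨c, hx, hSx, -⟩ := hS.exists_eigenbasis_coords x
  rw [hx, hSx, Finset.mul_sum]
  exact Finset.sum_le_sum fun i _ => mul_le_mul_of_nonneg_right
    (le_ciSup (Set.finite_range _).bddAbove i) (sq_nonneg _)

end Matrix.IsHermitian

theorem Matrix.PosSemidef.mulVec_dotProduct_mulVec_le {ι : Type*} [Fintype ι] [DecidableEq ι]
    {S : Matrix ι ι ℝ} (hS : S.PosSemidef) (x : ι → ℝ) :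
    (S *ᵥ x) ⬝ᵥ (S *ᵥ x) ≤ (⨆ i, hS.1.eigenvalues i) * (x ⬝ᵥ (S *ᵥ x)) := by
  obtain ⟨c, -, hSx, hSSx⟩ := hS.1.exists_eigenbasis_coords x
  rw [hSx, hSSx, Finset.mul_sum]
  refine Finset.sum_le_sum fun i _ => ?_
  have hle : hS.1.eigenvalues i ≤ ⨆ j, hS.1.eigenvalues j :=
    le_ciSup (Set.finite_range _).bddAbove i
  have := mul_le_mul_of_nonneg_right hle (mul_nonneg (hS.eigenvalues_nonneg i) (sq_nonneg (c i)))
  linarith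

theorem Matrix.transpose_mulVec_dotProduct_le {ι κ : Type*} [Fintype ι] [Fintype κ]
    [DecidableEq κ] (F : Matrix ι κ ℝ) (hF : (Fᵀ * F).IsHermitian) (x : ι → ℝ) :
    (Fᵀ *ᵥ x) ⬝ᵥ (Fᵀ *ᵥ x) ≤ (⨆ i, hF.eigenvalues i) * (x ⬝ᵥ x) := by
  set z := Fᵀ *ᵥ x
  obtain hz | hz := (dotProduct_self_nonneg z).eq_or_lt
  · rw [← hz]
    have hFF : (Fᵀ * F).PosSemidef := by simpa using posSemidef_conjTranspose_mul_self F
    exact mul_nonneg (Real.iSup_nonneg hFF.eigenvalues_nonneg) (dotProduct_self_nonneg x)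
  have hFz : (F *ᵥ z) ⬝ᵥ (F *ᵥ z) ≤ (⨆ i, hF.eigenvalues i) * (z ⬝ᵥ z) := by
    rw [← dotProduct_transpose_mul_self_mulVec]
    exact hF.dotProduct_mulVec_le_iSup_eigenvalues_mul z
  have hzz : z ⬝ᵥ z = (F *ᵥ z) ⬝ᵥ x := by
    rw [dotProduct_comm, dotProduct_mulVec, ← mulVec_transpose, transpose_transpose,
      dotProduct_comm]
  -- Cauchy–Schwarz: `‖z‖⁴ = ⟨F z, x⟩² ≤ ‖F z‖² ‖x‖² ≤ σ² ‖z‖² ‖x‖²`.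
  have := dotProduct_sq_le_dotProduct_self_mul (F *ᵥ z) x
  rw [← hzz] at this
  nlinarith [mul_le_mul_of_nonneg_right hFz (dotProduct_self_nonneg x)]

theorem sub_sqrt_div_two_le_of_sq_le {a s l : ℝ} (h : l ^ 2 ≤ a * l + s) :
    (a - √(a ^ 2 + 4 * s)) / 2 ≤ l := by
  have := Real.abs_le_sqrt (show (a - 2 * l) ^ 2 ≤ a ^ 2 + 4 * s by nlinarith)
  linarith [le_abs_self (a - 2 * l)]

theorem le_add_sqrt_div_two_of_sq_le {a s l : ℝ} (h : l ^ 2 ≤ a * l + s) :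
    l ≤ (a + √(a ^ 2 + 4 * s)) / 2 := by
  have := Real.abs_le_sqrt (show (2 * l - a) ^ 2 ≤ a ^ 2 + 4 * s by nlinarith)
  linarith [le_abs_self (2 * l - a)]

theorem le_sub_sqrt_div_two_of_le_sq_sub {a s l : ℝ} (hl : 2 * l ≤ a) (h : s ≤ l ^ 2 - a * l) :
    l ≤ (a - √(a ^ 2 + 4 * s)) / 2 := by
  have := Real.sqrt_le_sqrt (show a ^ 2 + 4 * s ≤ (a - 2 * l) ^ 2 by nlinarith)
  rw [Real.sqrt_sq (by linarith)] at this
  linarith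

section SaddlePoint

variable {ι κ : Type*} [Fintype ι] {M : Matrix ι ι ℝ} {F : Matrix ι κ ℝ}
  {lam a b σ σ₁ σ₂ : ℝ} {x : ι → ℝ} {y : κ → ℝ}

theorem saddlePoint_left_ne_zero (e2 : Fᵀ *ᵥ x = lam • y) (hlam : lam ≠ 0)
    (hxy : x ≠ 0 ∨ y ≠ 0) : x ≠ 0 := by
  rintro rfl
  rw [mulVec_zero, eq_comm, smul_eq_zero] at e2
  simp_all

variable [Fintype κ]

theorem saddlePoint_dotProduct_mulVec_add (e1 : M *ᵥ x + F *ᵥ y = lam • x)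
    (e2 : Fᵀ *ᵥ x = lam • y) :
    x ⬝ᵥ (M *ᵥ x) + lam * (y ⬝ᵥ y) = lam * (x ⬝ᵥ x) := by
  have hxFy : x ⬝ᵥ (F *ᵥ y) = lam * (y ⬝ᵥ y) := by
    rw [dotProduct_mulVec, ← mulVec_transpose, e2, smul_dotProduct, smul_eq_mul]
  rw [← hxFy, ← dotProduct_add, e1, dotProduct_smul, smul_eq_mul]

theorem saddlePoint_sq_mul_dotProduct_self (e1 : M *ᵥ x + F *ᵥ y = lam • x)
    (e2 : Fᵀ *ᵥ x = lam • y) :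
    lam ^ 2 * (x ⬝ᵥ x) = lam * (x ⬝ᵥ (M *ᵥ x)) + (Fᵀ *ᵥ x) ⬝ᵥ (Fᵀ *ᵥ x) := by
  rw [e2, smul_dotProduct, dotProduct_smul, smul_eq_mul, smul_eq_mul]
  linear_combination (-lam) * saddlePoint_dotProduct_mulVec_add e1 e2

theorem saddlePoint_mulVec_dotProduct_mulVec (e1 : M *ᵥ x + F *ᵥ y = lam • x) :
    (F *ᵥ y) ⬝ᵥ (F *ᵥ y) =
      lam ^ 2 * (x ⬝ᵥ x) - 2 * lam * (x ⬝ᵥ (M *ᵥ x)) + (M *ᵥ x) ⬝ᵥ (M *ᵥ x) := by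
  rw [eq_sub_of_add_eq' e1]
  simp only [sub_dotProduct, dotProduct_sub, smul_dotProduct, dotProduct_smul, smul_eq_mul,
    dotProduct_comm (M *ᵥ x) x]
  ring

theorem saddlePoint_right_ne_zero_of_nonpos (hM : M.PosDef) (e1 : M *ᵥ x + F *ᵥ y = lam • x)
    (e2 : Fᵀ *ᵥ x = lam • y) (hlam : lam ≤ 0) (hxy : x ≠ 0 ∨ y ≠ 0) : y ≠ 0 := by
  rintro rfl
  have hx : x ≠ 0 := by simpa using hxy
  have hq : 0 < x ⬝ᵥ (M *ᵥ x) := by simpa using hM.dotProduct_mulVec_pos hx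
  have := saddlePoint_dotProduct_mulVec_add e1 e2
  rw [zero_dotProduct, mul_zero, add_zero] at this
  nlinarith [dotProduct_self_nonneg x]

theorem saddlePoint_le_of_pos (e1 : M *ᵥ x + F *ᵥ y = lam • x) (e2 : Fᵀ *ᵥ x = lam • y)
    (hlam : 0 < lam) (hx : x ≠ 0) (ha : a * (x ⬝ᵥ x) ≤ x ⬝ᵥ (M *ᵥ x)) : a ≤ lam := by
  refine le_of_mul_le_mul_right ?_ (dotProduct_self_pos hx)
  nlinarith [saddlePoint_dotProduct_mulVec_add e1 e2, dotProduct_self_nonneg y]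

theorem saddlePoint_sq_le_of_nonneg (e1 : M *ᵥ x + F *ᵥ y = lam • x) (e2 : Fᵀ *ᵥ x = lam • y)
    (hlam : 0 ≤ lam) (hx : x ≠ 0) (hb : x ⬝ᵥ (M *ᵥ x) ≤ b * (x ⬝ᵥ x))
    (hσ : (Fᵀ *ᵥ x) ⬝ᵥ (Fᵀ *ᵥ x) ≤ σ ^ 2 * (x ⬝ᵥ x)) : lam ^ 2 ≤ b * lam + σ ^ 2 := by
  refine le_of_mul_le_mul_right ?_ (dotProduct_self_pos hx)
  nlinarith [saddlePoint_sq_mul_dotProduct_self e1 e2, mul_le_mul_of_nonneg_left hb hlam]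

theorem saddlePoint_sq_le_of_nonpos (e1 : M *ᵥ x + F *ᵥ y = lam • x) (e2 : Fᵀ *ᵥ x = lam • y)
    (hlam : lam ≤ 0) (hx : x ≠ 0) (ha : a * (x ⬝ᵥ x) ≤ x ⬝ᵥ (M *ᵥ x))
    (hσ : (Fᵀ *ᵥ x) ⬝ᵥ (Fᵀ *ᵥ x) ≤ σ ^ 2 * (x ⬝ᵥ x)) : lam ^ 2 ≤ a * lam + σ ^ 2 := by
  refine le_of_mul_le_mul_right ?_ (dotProduct_self_pos hx)
  nlinarith [saddlePoint_sq_mul_dotProduct_self e1 e2, mul_le_mul_of_nonpos_left ha hlam]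

theorem saddlePoint_le_sq_sub_of_nonpos (e1 : M *ᵥ x + F *ᵥ y = lam • x)
    (e2 : Fᵀ *ᵥ x = lam • y) (hlam : lam ≤ 0) (hy : y ≠ 0)
    (hb : x ⬝ᵥ (M *ᵥ x) ≤ b * (x ⬝ᵥ x)) (hb' : (M *ᵥ x) ⬝ᵥ (M *ᵥ x) ≤ b * (x ⬝ᵥ (M *ᵥ x)))
    (hσ : σ ^ 2 * (y ⬝ᵥ y) ≤ (F *ᵥ y) ⬝ᵥ (F *ᵥ y)) : σ ^ 2 ≤ lam ^ 2 - b * lam := by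
  refine le_of_mul_le_mul_right ?_ (dotProduct_self_pos hy)
  have hy2 : (lam ^ 2 - b * lam) * (y ⬝ᵥ y) =
      (lam - b) * (lam * (x ⬝ᵥ x) - x ⬝ᵥ (M *ᵥ x)) := by
    rw [← saddlePoint_dotProduct_mulVec_add e1 e2]
    ring
  nlinarith [saddlePoint_mulVec_dotProduct_mulVec e1, mul_le_mul_of_nonpos_left hb hlam]

theorem saddlePoint_mem_Icc_of_nonpos (hM : M.PosDef) (e1 : M *ᵥ x + F *ᵥ y = lam • x)
    (e2 : Fᵀ *ᵥ x = lam • y) (hxy : x ≠ 0 ∨ y ≠ 0) (hlam : lam ≤ 0) (hb₀ : 0 ≤ b)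
    (ha : a * (x ⬝ᵥ x) ≤ x ⬝ᵥ (M *ᵥ x)) (hb : x ⬝ᵥ (M *ᵥ x) ≤ b * (x ⬝ᵥ x))
    (hb' : (M *ᵥ x) ⬝ᵥ (M *ᵥ x) ≤ b * (x ⬝ᵥ (M *ᵥ x)))
    (hσ₁ : σ₁ ^ 2 * (y ⬝ᵥ y) ≤ (F *ᵥ y) ⬝ᵥ (F *ᵥ y))
    (hσ₂ : (Fᵀ *ᵥ x) ⬝ᵥ (Fᵀ *ᵥ x) ≤ σ₂ ^ 2 * (x ⬝ᵥ x)) :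
    lam ∈ Set.Icc ((a - √(a ^ 2 + 4 * σ₂ ^ 2)) / 2) ((b - √(b ^ 2 + 4 * σ₁ ^ 2)) / 2) := by
  constructor
  · refine sub_sqrt_div_two_le_of_sq_le ?_
    obtain rfl | hneg := hlam.eq_or_lt
    · simpa using sq_nonneg σ₂
    · have hx := saddlePoint_left_ne_zero e2 hneg.ne hxy
      exact saddlePoint_sq_le_of_nonpos e1 e2 hlam hx ha hσ₂
  · have hy := saddlePoint_right_ne_zero_of_nonpos hM e1 e2 hlam hxy
    exact le_sub_sqrt_div_two_of_le_sq_sub (by linarith)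
      (saddlePoint_le_sq_sub_of_nonpos e1 e2 hlam hy hb hb' hσ₁)

theorem saddlePoint_mem_Icc_of_pos (e1 : M *ᵥ x + F *ᵥ y = lam • x) (e2 : Fᵀ *ᵥ x = lam • y)
    (hxy : x ≠ 0 ∨ y ≠ 0) (hlam : 0 < lam) (ha : a * (x ⬝ᵥ x) ≤ x ⬝ᵥ (M *ᵥ x))
    (hb : x ⬝ᵥ (M *ᵥ x) ≤ b * (x ⬝ᵥ x)) (hσ : (Fᵀ *ᵥ x) ⬝ᵥ (Fᵀ *ᵥ x) ≤ σ ^ 2 * (x ⬝ᵥ x)) :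
    lam ∈ Set.Icc a ((b + √(b ^ 2 + 4 * σ ^ 2)) / 2) :=
  have hx := saddlePoint_left_ne_zero e2 hlam.ne' hxy
  ⟨saddlePoint_le_of_pos e1 e2 hlam hx ha,
    le_add_sqrt_div_two_of_sq_le (saddlePoint_sq_le_of_nonneg e1 e2 hlam.le hx hb hσ)⟩

end SaddlePoint

theorem symmetric_saddle_point_eigenvalue_bounds_general
    (n m : ℕ)
    (M : Matrix (Fin n) (Fin n) ℝ) (hM : M.PosDef)
    (F : Matrix (Fin n) (Fin m) ℝ)
    (α β σ₁ σ₂ : ℝ)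
    (hα : α = ⨅ i, hM.1.eigenvalues i)
    (hβ : β = ⨆ i, hM.1.eigenvalues i)
    (hσ₁ : 0 ≤ σ₁ ∧ σ₁ ^ 2 = ⨅ i, (Matrix.isHermitian_iff_isSymm.mpr (Matrix.transpose_mul Fᵀ F) : (Fᵀ * F).IsHermitian).eigenvalues i)
    (hσ₂ : 0 ≤ σ₂ ∧ σ₂ ^ 2 = ⨆ i, (Matrix.isHermitian_iff_isSymm.mpr (Matrix.transpose_mul Fᵀ F) : (Fᵀ * F).IsHermitian).eigenvalues i)
    (H : Matrix (Fin n ⊕ Fin m) (Fin n ⊕ Fin m) ℝ)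
    (hH : H = Matrix.fromBlocks M F Fᵀ 0) :
    ∀ lam : ℝ, (∃ v : Fin n ⊕ Fin m → ℝ, v ≠ 0 ∧ H *ᵥ v = lam • v) →
      lam ∈ Set.Icc ((α - Real.sqrt (α ^ 2 + 4 * σ₂ ^ 2)) / 2)
                    ((β - Real.sqrt (β ^ 2 + 4 * σ₁ ^ 2)) / 2) ∪
          Set.Icc α ((β + Real.sqrt (β ^ 2 + 4 * σ₂ ^ 2)) / 2) := by
  rintro lam ⟨v, hv, hHv⟩
  obtain ⟨x, y, rfl⟩ : ∃ x y, v = Sum.elim x y := ⟨_, _, (Sum.elim_comp_inl_inr v).symm⟩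
  rw [hH, fromBlocks_mulVec_sumElim_eq_smul_iff, zero_mulVec, add_zero] at hHv
  obtain ⟨e1, e2⟩ := hHv
  have hxy : x ≠ 0 ∨ y ≠ 0 := by
    contrapose! hv
    simp [hv]
  have ha : α * (x ⬝ᵥ x) ≤ x ⬝ᵥ (M *ᵥ x) := hα ▸ hM.1.iInf_eigenvalues_mul_dotProduct_self_le x
  have hb : x ⬝ᵥ (M *ᵥ x) ≤ β * (x ⬝ᵥ x) := hβ ▸ hM.1.dotProduct_mulVec_le_iSup_eigenvalues_mul x
  have hσ₂x : (Fᵀ *ᵥ x) ⬝ᵥ (Fᵀ *ᵥ x) ≤ σ₂ ^ 2 * (x ⬝ᵥ x) :=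
    hσ₂.2 ▸ transpose_mulVec_dotProduct_le F _ x
  rcases le_or_gt lam 0 with hlam | hlam
  · have hb₀ : 0 ≤ β := hβ ▸ Real.iSup_nonneg fun i => (hM.eigenvalues_pos i).le
    have hb' : (M *ᵥ x) ⬝ᵥ (M *ᵥ x) ≤ β * (x ⬝ᵥ (M *ᵥ x)) :=
      hβ ▸ hM.posSemidef.mulVec_dotProduct_mulVec_le x
    have hσ₁y : σ₁ ^ 2 * (y ⬝ᵥ y) ≤ (F *ᵥ y) ⬝ᵥ (F *ᵥ y) := by
      rw [hσ₁.2, ← dotProduct_transpose_mul_self_mulVec]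
      exact IsHermitian.iInf_eigenvalues_mul_dotProduct_self_le _ y
    exact Or.inl (saddlePoint_mem_Icc_of_nonpos hM e1 e2 hxy hlam hb₀ ha hb hb' hσ₁y hσ₂x)
  · exact Or.inr (saddlePoint_mem_Icc_of_pos e1 e2 hxy hlam ha hb hσ₂x)

/-- Rusten–Winther type eigenvalue inclusion for the symmetric saddle-point matrix
`H = [[M, F],[Fᵀ, 0]]`. -/
theorem symmetric_saddle_point_eigenvalue_bounds
    (n m : ℕ) (hmn : m < n)
    (M : Matrix (Fin n) (Fin n) ℝ) (hM : M.PosDef)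
    (F : Matrix (Fin n) (Fin m) ℝ) (hF : F.rank = m)
    (α β σ₁ σ₂ : ℝ)
    (hα : α = ⨅ i, hM.1.eigenvalues i)
    (hβ : β = ⨆ i, hM.1.eigenvalues i)
    (hσ₁ : 0 ≤ σ₁ ∧ σ₁ ^ 2 = ⨅ i, (Matrix.isHermitian_iff_isSymm.mpr (Matrix.transpose_mul Fᵀ F) : (Fᵀ * F).IsHermitian).eigenvalues i)
    (hσ₂ : 0 ≤ σ₂ ∧ σ₂ ^ 2 = ⨆ i, (Matrix.isHermitian_iff_isSymm.mpr (Matrix.transpose_mul Fᵀ F) : (Fᵀ * F).IsHermitian).eigenvalues i)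
    (H : Matrix (Fin n ⊕ Fin m) (Fin n ⊕ Fin m) ℝ)
    (hH : H = Matrix.fromBlocks M F Fᵀ 0) :
    ∀ lam : ℝ, (∃ v : Fin n ⊕ Fin m → ℝ, v ≠ 0 ∧ H *ᵥ v = lam • v) →
      lam ∈ Set.Icc ((α - Real.sqrt (α ^ 2 + 4 * σ₂ ^ 2)) / 2)
                    ((β - Real.sqrt (β ^ 2 + 4 * σ₁ ^ 2)) / 2) ∪
          Set.Icc α ((β + Real.sqrt (β ^ 2 + 4 * σ₂ ^ 2)) / 2) :=
  symmetric_saddle_point_eigenvalue_bounds_general n m M hM F α β σ₁ σ₂ hα hβ hσ₁ hσ₂ H hH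
end

section
/- Let A be n×n symmetric positive definite, B an n×m full-column-rank matrix, 𝒜 = [[A,B],[Bᵀ,0]] and 𝒜̂ = [[A,B],[Bᵀ,-C]] with C = BᵀA⁻¹B. If λ = 1 is an eigenvalue of 𝒜̂⁻¹𝒜 with eigenvector (v_u, v_t), then v_t = 0 and v_u is arbitrary nonzero; i.e., the eigenspace for λ = 1 is exactly {(v_u, 0) : v_u ∈ ℝⁿ}. -/
open Matrix

theorem Matrix.mulVec_injective_iff_rank_eq_card {K l m : Type*} [Field K] [Fintype m]
    {B : Matrix l m K} :
    Function.Injective B.mulVec ↔ B.rank = Fintype.card m := by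
  rw [mulVec_injective_iff, linearIndependent_iff_card_eq_finrank_span,
    Set.finrank, ← rank_eq_finrank_span_cols, eq_comm]

theorem Matrix.fromBlocks_mulVec_eq_fromBlocks_mulVec_iff {α l m n o : Type*} [Ring α]
    [Fintype l] [Fintype m] (A : Matrix n l α) (B : Matrix n m α) (C : Matrix o l α)
    (D D' : Matrix o m α) (v : l ⊕ m → α) :
    fromBlocks A B C D *ᵥ v = fromBlocks A B C D' *ᵥ v ↔
      D *ᵥ (v ∘ Sum.inr) = D' *ᵥ (v ∘ Sum.inr) := by
  simp only [fromBlocks_mulVec, Sum.elim_eq_iff, add_right_inj, true_and]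

/-- For `C = BᵀA⁻¹B`, the eigenspace of the generalized eigenproblem
`𝒜v = λ𝒜̂v` at `λ = 1` is exactly `{(v_u, 0)}`. -/
theorem racp_eigenspace_at_one
    (n m : ℕ)
    (A : Matrix (Fin n) (Fin n) ℝ) (hA : A.PosDef)
    (B : Matrix (Fin n) (Fin m) ℝ) (hB : B.rank = m)
    (C : Matrix (Fin m) (Fin m) ℝ) (hC : C = Bᵀ * A⁻¹ * B)
    (𝒜 : Matrix (Fin n ⊕ Fin m) (Fin n ⊕ Fin m) ℝ)
    (h𝒜 : 𝒜 = Matrix.fromBlocks A B Bᵀ 0)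
    (𝒜hat : Matrix (Fin n ⊕ Fin m) (Fin n ⊕ Fin m) ℝ)
    (h𝒜hat : 𝒜hat = Matrix.fromBlocks A B Bᵀ (-C)) :
    {v : Fin n ⊕ Fin m → ℝ | 𝒜 *ᵥ v = 𝒜hat *ᵥ v} =
      {v : Fin n ⊕ Fin m → ℝ | ∀ j : Fin m, v (Sum.inr j) = 0} := by
  have hB_inj : Function.Injective B.mulVec :=
    mulVec_injective_iff_rank_eq_card.2 (by rw [hB, Fintype.card_fin])
  have hC_posDef : C.PosDef := by
    simpa only [hC, conjTranspose_eq_transpose_of_trivial] using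
      hA.inv.conjTranspose_mul_mul_same hB_inj
  have hC_inj : Function.Injective C.mulVec := mulVec_injective_iff_isUnit.2 hC_posDef.isUnit
  ext v
  rw [Set.mem_ofPred_eq, Set.mem_ofPred_eq, h𝒜, h𝒜hat,
    fromBlocks_mulVec_eq_fromBlocks_mulVec_iff, zero_mulVec, eq_comm, neg_mulVec, neg_eq_zero,
    hC_inj.eq_iff' (mulVec_zero C), funext_iff]
  rfl
end

section
/- Let A be n×n symmetric positive definite and B an n×m full-column-rank matrix, C = BᵀA⁻¹B, 𝒜̄ = [[A,B],[-Bᵀ,C]]. For the generalized eigenproblem 𝒜v = λ𝒜̄v with 𝒜 = [[A,B],[Bᵀ,0]], the eigenvalue λ = 1 has geometric multiplicity n: the eigenspace is {(v_u, v_t) : C v_t = 2Bᵀv_u, v_u ∈ ℝⁿ} which is n-dimensional. -/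
open Matrix

/-!
For `λ = 1` the first block row of `𝒜 v = 𝒜̄ v` is an identity, and the second reads
`Bᵀ v_u = -Bᵀ v_u + C v_t`, i.e. `C v_t = 2 Bᵀ v_u`. Since `A⁻¹` is positive definite and `B` is
injective, `C = BᵀA⁻¹B` is positive definite, hence invertible, so the eigenspace is the graph of
`v_u ↦ C⁻¹ (2 Bᵀ v_u)` and has dimension `n`.
-/

theorem Matrix.mulVec_injective_of_rank_eq {K m n : Type*} [Field K] [Fintype n] [DecidableEq n]
    {A : Matrix m n K} (hA : A.rank = Fintype.card n) : Function.Injective A.mulVec := by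
  have hker : Module.finrank K (LinearMap.ker A.mulVecLin) = 0 := by
    have := LinearMap.finrank_range_add_finrank_ker A.mulVecLin
    rw [Module.finrank_fintype_fun_eq_card, ← Matrix.rank, hA] at this
    omega
  rw [← Matrix.coe_mulVecLin, ← LinearMap.ker_eq_bot]
  exact Submodule.finrank_eq_zero.mp hker

theorem Matrix.mulVec_eq_iff_eq_nonsing_inv_mulVec {R m : Type*} [CommRing R] [Fintype m]
    [DecidableEq m] {C : Matrix m m R} (hC : IsUnit C) (x y : m → R) :
    C *ᵥ x = y ↔ x = C⁻¹ *ᵥ y := by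
  have hdet := (isUnit_iff_isUnit_det C).mp hC
  constructor
  · rintro rfl
    rw [mulVec_mulVec, nonsing_inv_mul C hdet, one_mulVec]
  · rintro rfl
    rw [mulVec_mulVec, mul_nonsing_inv C hdet, one_mulVec]

theorem LinearMap.finrank_comap_graph {R M N V : Type*} [Ring R] [StrongRankCondition R]
    [AddCommGroup M] [Module R M] [Module.Free R M] [Module.Finite R M]
    [AddCommGroup N] [Module R N] [AddCommGroup V] [Module R V]
    (e : V ≃ₗ[R] M × N) (f : M →ₗ[R] N) :
    Module.finrank R (f.graph.comap e.toLinearMap) = Module.finrank R M := by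
  rw [Submodule.comap_equiv_eq_map_symm, LinearEquiv.finrank_map_eq, LinearMap.graph_eq_range_prod]
  exact LinearMap.finrank_range_of_inj fun x y h => congrArg Prod.fst h

section Saddle

variable {R n m : Type*} [CommRing R] [Fintype n] [Fintype m]

theorem Matrix.fromBlocks_mulVec_eq_iff (A : Matrix n n R) (B : Matrix n m R)
    (C : Matrix m m R) (v : n ⊕ m → R) :
    fromBlocks A B Bᵀ 0 *ᵥ v = fromBlocks A B (-Bᵀ) C *ᵥ v ↔
      C *ᵥ (fun j => v (Sum.inr j)) = (2 : R) • (Bᵀ *ᵥ (fun i => v (Sum.inl i))) := by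
  rw [fromBlocks_mulVec, fromBlocks_mulVec, Sum.elim_eq_iff, neg_mulVec, zero_mulVec, add_zero,
    two_smul, and_iff_right rfl, eq_neg_add_iff_add_eq, eq_comm]
  rfl

theorem Matrix.ker_fromBlocks_sub_fromBlocks_eq_comap_graph [DecidableEq m]
    (A : Matrix n n R) (B : Matrix n m R) {C : Matrix m m R} (hC : IsUnit C) :
    LinearMap.ker (fromBlocks A B Bᵀ 0 - fromBlocks A B (-Bᵀ) C).mulVecLin =
      (C⁻¹ * (2 : R) • Bᵀ).mulVecLin.graph.comap
        (LinearEquiv.sumArrowLequivProdArrow n m R R).toLinearMap := by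
  ext v
  rw [LinearMap.mem_ker, mulVecLin_apply, sub_mulVec, sub_eq_zero, fromBlocks_mulVec_eq_iff,
    mulVec_eq_iff_eq_nonsing_inv_mulVec hC, Submodule.mem_comap, LinearMap.mem_graph_iff,
    mulVecLin_apply, ← mulVec_mulVec, smul_mulVec]
  rfl

end Saddle

/-- For `C = BᵀA⁻¹B`, the eigenvalue `λ = 1` of the generalized eigenproblem
`𝒜v = λ𝒜̄v` has geometric multiplicity `n`, with eigenspace
`{(v_u, v_t) : C v_t = 2 Bᵀ v_u}`. -/
theorem racp_alternative_eigenspace_at_one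
    (n m : ℕ)
    (A : Matrix (Fin n) (Fin n) ℝ) (hA : A.PosDef)
    (B : Matrix (Fin n) (Fin m) ℝ) (hB : B.rank = m)
    (C : Matrix (Fin m) (Fin m) ℝ) (hC : C = Bᵀ * A⁻¹ * B)
    (𝒜 : Matrix (Fin n ⊕ Fin m) (Fin n ⊕ Fin m) ℝ)
    (h𝒜 : 𝒜 = Matrix.fromBlocks A B Bᵀ 0)
    (𝒜bar : Matrix (Fin n ⊕ Fin m) (Fin n ⊕ Fin m) ℝ)
    (h𝒜bar : 𝒜bar = Matrix.fromBlocks A B (-Bᵀ) C) :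
    {v : Fin n ⊕ Fin m → ℝ | 𝒜 *ᵥ v = 𝒜bar *ᵥ v} =
      {v : Fin n ⊕ Fin m → ℝ |
        C *ᵥ (fun j => v (Sum.inr j)) = (2 : ℝ) • (Bᵀ *ᵥ (fun i => v (Sum.inl i)))} ∧
    Module.finrank ℝ (LinearMap.ker ((𝒜 - 𝒜bar).mulVecLin)) = n := by
  subst h𝒜 h𝒜bar
  have hBinj : Function.Injective B.mulVec :=
    mulVec_injective_of_rank_eq (hB.trans (Fintype.card_fin m).symm)
  have hCpos : C.PosDef := by
    simpa [hC] using hA.inv.conjTranspose_mul_mul_same hBinj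
  refine ⟨Set.ext fun v => fromBlocks_mulVec_eq_iff A B C v, ?_⟩
  rw [ker_fromBlocks_sub_fromBlocks_eq_comap_graph A B hCpos.isUnit,
    LinearMap.finrank_comap_graph, Module.finrank_fin_fun]
end

section
/- Let M be an n×n symmetric positive definite matrix with λ_min(M) = α and λ_max(M) = β, and F an n×m real matrix with largest singular value σ. For the matrix K = [[M, F],[-Fᵀ, 0]], every complex (non-real) eigenvalue λ of K satisfies α/2 ≤ Re(λ) ≤ β/2 and |Im(λ)| ≤ √(σ² - Re(λ)²) ≤ √(σ² - α²/4); in particular K has no non-real eigenvalues if 2σ < α. -/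
/-!
Let `M x + F y = λ x` and `-Fᴴ x = λ y`. Pairing the first equation with `x` and the second with
`y` gives `⟪x, M x⟫ = λ ‖x‖² + conj λ ‖y‖²`. The left side is real, so for non-real `λ` the
imaginary part forces `‖x‖ = ‖y‖`; then `⟪x, M x⟫ = 2 Re λ ‖x‖²` lies between `α ‖x‖²` and
`β ‖x‖²`, and `|λ| ‖y‖² = |⟪x, F y⟫| ≤ σ ‖x‖ ‖y‖` gives `|λ| ≤ σ`. The Rayleigh bounds
`α ‖x‖² ≤ ⟪x, M x⟫ ≤ β ‖x‖²` are the matrix inequalities `α ≤ M ≤ β` of the continuous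
functional calculus, and hold for complex `x` because complexifying a real matrix can only
shrink its spectrum.
-/

open Matrix
open scoped MatrixOrder ComplexOrder InnerProductSpace

section SaddlePoint

variable {E G : Type*} [NormedAddCommGroup E] [InnerProductSpace ℂ E]
  [NormedAddCommGroup G] [InnerProductSpace ℂ G]

theorem saddle_point_eigenvalue_bounds {A : E →ₗ[ℂ] E} {B : G →ₗ[ℂ] E} {C : E →ₗ[ℂ] G}
    {a b s : ℝ} (hA : ∀ u, (a : ℂ) * ‖u‖ ^ 2 ≤ ⟪u, A u⟫_ℂ ∧ ⟪u, A u⟫_ℂ ≤ b * ‖u‖ ^ 2)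
    (hB : ∀ v, ‖B v‖ ≤ s * ‖v‖) (hBC : ∀ u v, ⟪C u, v⟫_ℂ = ⟪u, B v⟫_ℂ)
    {lam : ℂ} {x : E} {y : G} (hx : A x + B y = lam • x) (hy : -C x = lam • y)
    (hxy : x ≠ 0 ∨ y ≠ 0) (him : lam.im ≠ 0) :
    a ≤ 2 * lam.re ∧ 2 * lam.re ≤ b ∧ ‖lam‖ ≤ s := by
  have hBy : ⟪x, B y⟫_ℂ = -(starRingEnd ℂ lam * ‖y‖ ^ 2) := by
    have h := congrArg (⟪y, ·⟫_ℂ) hy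
    simp only [inner_neg_right, inner_smul_right, inner_self_eq_norm_sq_to_K] at h
    rw [← hBC, ← inner_conj_symm, ← neg_neg ⟪y, C x⟫_ℂ, h]
    simp
  have hAx : ⟪x, A x⟫_ℂ = lam * ‖x‖ ^ 2 + starRingEnd ℂ lam * ‖y‖ ^ 2 := by
    have h := congrArg (⟪x, ·⟫_ℂ) hx
    simp only [inner_add_right, inner_smul_right, inner_self_eq_norm_sq_to_K, hBy] at h
    linear_combination h
  obtain ⟨⟨hlo_re, hlo_im⟩, ⟨hhi_re, -⟩⟩ := And.imp Complex.le_def.mp Complex.le_def.mp (hA x)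
  simp only [hAx, ← Complex.ofReal_pow, Complex.add_re, Complex.add_im, Complex.mul_re,
    Complex.mul_im, Complex.conj_re, Complex.conj_im, Complex.ofReal_re,
    Complex.ofReal_im] at hlo_re hlo_im hhi_re
  have hxy_norm : ‖x‖ = ‖y‖ := by
    refine (pow_left_inj₀ (norm_nonneg x) (norm_nonneg y) two_ne_zero).mp ?_
    exact mul_left_cancel₀ him (by linarith)
  have hx_pos : 0 < ‖x‖ ^ 2 := by
    rcases hxy with hx0 | hy0
    · positivity
    · rw [hxy_norm]; positivity
  rw [← hxy_norm] at hlo_re hhi_re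
  refine ⟨le_of_mul_le_mul_right (by linarith) hx_pos,
    le_of_mul_le_mul_right (by linarith) hx_pos, le_of_mul_le_mul_right ?_ hx_pos⟩
  calc ‖lam‖ * ‖x‖ ^ 2 = ‖⟪x, B y⟫_ℂ‖ := by simp [hBy, hxy_norm]
    _ ≤ ‖x‖ * ‖B y‖ := norm_inner_le_norm x (B y)
    _ ≤ ‖x‖ * (s * ‖y‖) := by gcongr; exact hB y
    _ = s * ‖x‖ ^ 2 := by rw [hxy_norm]; ring

end SaddlePoint

theorem Complex.abs_im_le_sqrt_sq_sub_re_sq {z : ℂ} {r : ℝ} (h : ‖z‖ ≤ r) :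
    |z.im| ≤ √(r ^ 2 - z.re ^ 2) := by
  rw [← Real.sqrt_sq_eq_abs]
  refine Real.sqrt_le_sqrt ?_
  have hz : ‖z‖ ^ 2 = z.re ^ 2 + z.im ^ 2 := by
    rw [Complex.sq_norm, Complex.normSq_apply]; ring
  nlinarith [norm_nonneg z]

namespace Matrix

variable {𝕜 m n : Type*} [RCLike 𝕜] [Fintype m] [DecidableEq m] [Fintype n] [DecidableEq n]

theorem spectrum_map_subset {R α β : Type*} [CommSemiring R] [Ring α] [Ring β] [Algebra R α]
    [Algebra R β] (f : α →ₐ[R] β) (A : Matrix n n α) : spectrum R (A.map f) ⊆ spectrum R A :=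
  AlgHom.spectrum_apply_subset f.mapMatrix A

theorem IsHermitian.spectrum_real_subset_Icc {A : Matrix n n 𝕜} (hA : A.IsHermitian) :
    spectrum ℝ A ⊆ Set.Icc (⨅ i, hA.eigenvalues i) (⨆ i, hA.eigenvalues i) := by
  rw [hA.spectrum_real_eq_range_eigenvalues]
  rintro _ ⟨i, rfl⟩
  exact ⟨ciInf_le (Finite.bddBelow_range _) i, le_ciSup (Finite.bddAbove_range _) i⟩

theorem inner_toEuclideanLin_sub_algebraMap (A : Matrix n n 𝕜) (r : ℝ)
    (u : EuclideanSpace 𝕜 n) :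
    ⟪u, toEuclideanLin (A - algebraMap ℝ _ r) u⟫_𝕜 = ⟪u, toEuclideanLin A u⟫_𝕜 - r * ‖u‖ ^ 2 := by
  rw [IsScalarTower.algebraMap_apply ℝ 𝕜, Algebra.algebraMap_eq_smul_one, map_sub, map_smul,
    toLpLin_one]
  simp only [LinearMap.sub_apply, LinearMap.smul_apply, LinearMap.id_apply, inner_sub_right,
    inner_smul_right, inner_self_eq_norm_sq_to_K]

theorem IsHermitian.mul_norm_sq_le_inner_toEuclideanLin {A : Matrix n n 𝕜}
    (hA : A.IsHermitian) {r : ℝ} (hr : ∀ x ∈ spectrum ℝ A, r ≤ x) (u : EuclideanSpace 𝕜 n) :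
    (r : 𝕜) * ‖u‖ ^ 2 ≤ ⟪u, toEuclideanLin A u⟫_𝕜 := by
  have hP : (A - algebraMap ℝ _ r).PosSemidef :=
    (algebraMap_le_iff_le_spectrum hA.isSelfAdjoint).mpr hr
  have h := (isPositive_toEuclideanLin_iff.mpr hP).inner_nonneg_right u
  rwa [inner_toEuclideanLin_sub_algebraMap, sub_nonneg] at h

theorem IsHermitian.inner_toEuclideanLin_le_mul_norm_sq {A : Matrix n n 𝕜}
    (hA : A.IsHermitian) {r : ℝ} (hr : ∀ x ∈ spectrum ℝ A, x ≤ r) (u : EuclideanSpace 𝕜 n) :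
    ⟪u, toEuclideanLin A u⟫_𝕜 ≤ (r : 𝕜) * ‖u‖ ^ 2 := by
  have hP : (algebraMap ℝ _ r - A).PosSemidef :=
    (le_algebraMap_iff_spectrum_le hA.isSelfAdjoint).mpr hr
  have h := (isPositive_toEuclideanLin_iff.mpr hP).inner_nonneg_right u
  rwa [← neg_sub, map_neg, LinearMap.neg_apply, inner_neg_right,
    inner_toEuclideanLin_sub_algebraMap, neg_nonneg, sub_nonpos] at h

theorem norm_toEuclideanLin_le {F : Matrix m n 𝕜} {s : ℝ} (hs : 0 ≤ s)
    (hF : ∀ x ∈ spectrum ℝ (Fᴴ * F), x ≤ s ^ 2) (v : EuclideanSpace 𝕜 n) :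
    ‖toEuclideanLin F v‖ ≤ s * ‖v‖ := by
  have h := (isHermitian_conjTranspose_mul_self F).inner_toEuclideanLin_le_mul_norm_sq hF v
  rw [toLpLin_mul (q := 2), toEuclideanLin_conjTranspose_eq_adjoint, LinearMap.comp_apply,
    LinearMap.adjoint_inner_right, inner_self_eq_norm_sq_to_K] at h
  have h' : ‖toEuclideanLin F v‖ ^ 2 ≤ (s * ‖v‖) ^ 2 := by
    rw [mul_pow]; exact_mod_cast h
  exact (pow_le_pow_iff_left₀ (norm_nonneg _) (by positivity) two_ne_zero).mp h'

theorem fromBlocks_eigenvalue_bounds {M : Matrix n n ℂ} (hM : M.IsHermitian)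
    {F : Matrix n m ℂ} {α β σ : ℝ} (hα : ∀ x ∈ spectrum ℝ M, α ≤ x)
    (hβ : ∀ x ∈ spectrum ℝ M, x ≤ β) (hσ : 0 ≤ σ) (hF : ∀ x ∈ spectrum ℝ (Fᴴ * F), x ≤ σ ^ 2)
    {lam : ℂ} {z : n ⊕ m → ℂ} (hz : z ≠ 0) (hK : fromBlocks M F (-Fᴴ) 0 *ᵥ z = lam • z)
    (him : lam.im ≠ 0) :
    α ≤ 2 * lam.re ∧ 2 * lam.re ≤ β ∧ ‖lam‖ ≤ σ := by
  rw [fromBlocks_mulVec] at hK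
  refine saddle_point_eigenvalue_bounds (A := toEuclideanLin M) (B := toEuclideanLin F)
    (C := toEuclideanLin Fᴴ) (x := WithLp.toLp 2 (z ∘ Sum.inl))
    (y := WithLp.toLp 2 (z ∘ Sum.inr))
    (fun u => ⟨hM.mul_norm_sq_le_inner_toEuclideanLin hα u,
      hM.inner_toEuclideanLin_le_mul_norm_sq hβ u⟩)
    (norm_toEuclideanLin_le hσ hF) ?_ ?_ ?_ ?_ him
  · intro u v
    rw [toEuclideanLin_conjTranspose_eq_adjoint, LinearMap.adjoint_inner_left]
  · ext i
    simpa using congrFun hK (Sum.inl i)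
  · ext j
    simpa [neg_mulVec] using congrFun hK (Sum.inr j)
  · by_contra! h
    apply hz
    ext (i | j)
    · simpa using congrFun (congrArg WithLp.ofLp h.1) i
    · simpa using congrFun (congrArg WithLp.ofLp h.2) j

theorem fromBlocks_map_ofReal_eigenvalue_bounds {M : Matrix n n ℝ} (hM : M.IsHermitian)
    (F : Matrix n m ℝ) {σ : ℝ} (hσ : 0 ≤ σ)
    (hF : ⨆ i, (isHermitian_conjTranspose_mul_self F).eigenvalues i ≤ σ ^ 2)
    {lam : ℂ} {z : n ⊕ m → ℂ} (hz : z ≠ 0)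
    (hK : (fromBlocks M F (-Fᵀ) 0).map Complex.ofReal *ᵥ z = lam • z) (him : lam.im ≠ 0) :
    ⨅ i, hM.eigenvalues i ≤ 2 * lam.re ∧ 2 * lam.re ≤ ⨆ i, hM.eigenvalues i ∧ ‖lam‖ ≤ σ := by
  have hM_spec := (spectrum_map_subset Complex.ofRealAm M).trans hM.spectrum_real_subset_Icc
  have hFF : (F.map Complex.ofReal)ᴴ * F.map Complex.ofReal = (Fᴴ * F).map Complex.ofRealAm := by
    ext i j
    simp [mul_apply]
  have hKc : (fromBlocks M F (-Fᵀ) 0).map Complex.ofReal =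
      fromBlocks (M.map Complex.ofReal) (F.map Complex.ofReal) (-(F.map Complex.ofReal)ᴴ) 0 := by
    rw [fromBlocks_map, ← conjTranspose_map _ fun _ => by simp,
      conjTranspose_eq_transpose_of_trivial, Matrix.map_neg _ Complex.ofReal_neg]
    simp
  rw [hKc] at hK
  refine fromBlocks_eigenvalue_bounds (hM.map _ fun _ => by simp) (fun x hx => (hM_spec hx).1)
    (fun x hx => (hM_spec hx).2) hσ (fun x hx => ?_) hz hK him
  rw [hFF] at hx
  exact ((isHermitian_conjTranspose_mul_self F).spectrum_real_subset_Icc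
    (spectrum_map_subset Complex.ofRealAm _ hx)).2.trans hF

end Matrix

/-- Bounds on the complex (non-real) eigenvalues of `K = [[M, F],[-Fᵀ, 0]]` with `M` SPD:
`α/2 ≤ Re λ ≤ β/2` and `|Im λ| ≤ √(σ² - Re(λ)²) ≤ √(σ² - α²/4)`; moreover there are no
non-real eigenvalues if `2σ < α`. -/
theorem shifted_skew_saddle_point_complex_bounds
    (n m : ℕ)
    (M : Matrix (Fin n) (Fin n) ℝ) (hM : M.PosDef)
    (F : Matrix (Fin n) (Fin m) ℝ)
    (α β σ : ℝ)
    (hα : α = ⨅ i, hM.1.eigenvalues i)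
    (hβ : β = ⨆ i, hM.1.eigenvalues i)
    (hσ : 0 ≤ σ ∧ σ ^ 2 = ⨆ i, (Matrix.isHermitian_conjTranspose_mul_self F).eigenvalues i)
    (K : Matrix (Fin n ⊕ Fin m) (Fin n ⊕ Fin m) ℝ)
    (hK : K = Matrix.fromBlocks M F (-Fᵀ) 0) :
    (∀ lam : ℂ, lam.im ≠ 0 →
      (∃ z : Fin n ⊕ Fin m → ℂ, z ≠ 0 ∧ (K.map Complex.ofReal) *ᵥ z = lam • z) →
      α / 2 ≤ lam.re ∧ lam.re ≤ β / 2 ∧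
      |lam.im| ≤ Real.sqrt (σ ^ 2 - lam.re ^ 2) ∧
      Real.sqrt (σ ^ 2 - lam.re ^ 2) ≤ Real.sqrt (σ ^ 2 - α ^ 2 / 4)) ∧
    (2 * σ < α → ∀ lam : ℂ,
      (∃ z : Fin n ⊕ Fin m → ℂ, z ≠ 0 ∧ (K.map Complex.ofReal) *ᵥ z = lam • z) →
      lam.im = 0) := by
  obtain ⟨hσ0, hσ2⟩ := hσ
  have hα0 : 0 ≤ α := hα ▸ Real.iInf_nonneg fun i => (hM.eigenvalues_pos i).le
  have key : ∀ lam : ℂ, lam.im ≠ 0 →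
      (∃ z : Fin n ⊕ Fin m → ℂ, z ≠ 0 ∧ (K.map Complex.ofReal) *ᵥ z = lam • z) →
      α ≤ 2 * lam.re ∧ 2 * lam.re ≤ β ∧ ‖lam‖ ≤ σ := by
    rintro lam him ⟨z, hz, hKz⟩
    subst hα hβ hK
    exact fromBlocks_map_ofReal_eigenvalue_bounds hM.1 F hσ0 hσ2.ge hz hKz him
  refine ⟨fun lam him hex => ?_, fun hασ lam hex => ?_⟩
  · obtain ⟨hlo, hhi, hnorm⟩ := key lam him hex
    exact ⟨by linarith, by linarith, Complex.abs_im_le_sqrt_sq_sub_re_sq hnorm,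
      Real.sqrt_le_sqrt (by nlinarith)⟩
  · by_contra him
    obtain ⟨hlo, -, hnorm⟩ := key lam him hex
    linarith [Complex.re_le_norm lam]
end
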